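/- arXiv:2406.17726 — 7 statements merged into one kernel-verified Lean document; each statement's English description precedes it below -/
import Mathlib

section
/- Suppose P_N belongs to Panjer(a(Θ), b(Θ); 0) and that a∘Θ and b∘Θ are P-integrable. Then for every integer n ≥ 1, P(N = n) = ∫_Ω 1_{{N = n−1}}(ω) · (a(Θ(ω)) + b(Θ(ω))/n) dP(ω). In particular, with μ_{n−1}(A) := P(A ∩ {N = n−1})/P(N = n−1) whenever P(N = n−1) > 0, one has P(N = n) = C_n · P(N = n−1) where C_n := ∫_Ω (a(Θ) + b(Θ)/n) dμ_{n−1}. -/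
/-!
Consistency of the regular conditional probability gives `P_θ(E ∩ {Θ ∈ B}) = 𝟙_B(θ) P_θ(E)` for
`P_Θ`-almost every `θ`, so on any event `E` the law of `Θ` under `P(· ∩ E)` has density
`θ ↦ P_θ(E)` with respect to `P_Θ`. Taking `E = {N = n - 1}` and `g = a + b/n`, this gives
`∫_E g(Θ) dP = ∫ g(θ) P_θ(N = n - 1) dP_Θ(θ)`; by the Panjer recursion the integrand is
`P_θ(N = n)`, which integrates to `P(N = n)`.
-/

open MeasureTheory ProbabilityTheory

structure IsConsistentCondProb {Ω α : Type*} [MeasurableSpace Ω] [MeasurableSpace α]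
    (P : Measure Ω) (Θ : Ω → α) (κ : α → Measure Ω) : Prop where
  measurable_apply : ∀ E : Set Ω, MeasurableSet E → Measurable fun θ => κ θ E
  lintegral_apply : ∀ E : Set Ω, MeasurableSet E → ∫⁻ θ, κ θ E ∂(P.map Θ) = P E
  ae_preimage_eq_one : ∀ B : Set α, MeasurableSet B →
    ∀ᵐ θ ∂((P.map Θ).restrict B), κ θ (Θ ⁻¹' B) = 1

namespace IsConsistentCondProb

variable {Ω α : Type*} [MeasurableSpace Ω] [MeasurableSpace α]
  {P : Measure Ω} {Θ : Ω → α} {κ : α → Measure Ω} [∀ θ, IsProbabilityMeasure (κ θ)]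

theorem ae_measure_inter_preimage_eq_indicator (hκ : IsConsistentCondProb P Θ κ)
    (hΘ : Measurable Θ) (E : Set Ω) {B : Set α} (hB : MeasurableSet B) :
    ∀ᵐ θ ∂(P.map Θ), κ θ (E ∩ Θ ⁻¹' B) = B.indicator (fun θ => κ θ E) θ := by
  filter_upwards [(ae_restrict_iff' hB).mp (hκ.ae_preimage_eq_one B hB),
    (ae_restrict_iff' hB.compl).mp (hκ.ae_preimage_eq_one Bᶜ hB.compl)] with θ hin hout
  by_cases hθ : θ ∈ B
  · rw [Set.indicator_of_mem hθ]
    exact measure_inter_conull ((prob_compl_eq_zero_iff (hΘ hB)).mpr (hin hθ))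
  · rw [Set.indicator_of_notMem hθ]
    have hnull : κ θ (Θ ⁻¹' B) = 0 := by
      rw [← compl_compl (Θ ⁻¹' B), prob_compl_eq_zero_iff (hΘ hB).compl]
      exact hout hθ
    exact measure_mono_null Set.inter_subset_right hnull

theorem toReal_measure_eq_integral (hκ : IsConsistentCondProb P Θ κ) {E : Set Ω}
    (hE : MeasurableSet E) : (P E).toReal = ∫ θ, (κ θ E).toReal ∂(P.map Θ) := by
  rw [← hκ.lintegral_apply E hE, integral_toReal (hκ.measurable_apply E hE).aemeasurable
    (.of_forall fun _ => measure_lt_top _ _)]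

theorem map_restrict_eq_withDensity (hκ : IsConsistentCondProb P Θ κ) (hΘ : Measurable Θ)
    {E : Set Ω} (hE : MeasurableSet E) :
    (P.restrict E).map Θ = (P.map Θ).withDensity fun θ => κ θ E := by
  ext B hB
  rw [Measure.map_apply hΘ hB, Measure.restrict_apply (hΘ hB), Set.inter_comm,
    withDensity_apply _ hB, ← lintegral_indicator hB, ← hκ.lintegral_apply _ (hE.inter (hΘ hB))]
  exact lintegral_congr_ae (hκ.ae_measure_inter_preimage_eq_indicator hΘ E hB)

theorem setIntegral_comp_eq_integral_toReal_mul (hκ : IsConsistentCondProb P Θ κ)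
    (hΘ : Measurable Θ) {E : Set Ω} (hE : MeasurableSet E) {g : α → ℝ} (hg : Measurable g) :
    ∫ ω in E, g (Θ ω) ∂P = ∫ θ, (κ θ E).toReal * g θ ∂(P.map Θ) := by
  rw [← integral_map hΘ.aemeasurable hg.aestronglyMeasurable,
    hκ.map_restrict_eq_withDensity hΘ hE, integral_withDensity_eq_integral_toReal_smul
      (hκ.measurable_apply E hE) (.of_forall fun _ => measure_lt_top _ _)]
  rfl

end IsConsistentCondProb

theorem mixed_panjer_pmf_recursion_general
    {Ω : Type*} [MeasurableSpace Ω] (P : Measure Ω) [IsProbabilityMeasure P]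
    (d : ℕ)
    (Θ : Ω → (Fin d → ℝ)) (hΘ : Measurable Θ)
    (Pθ : (Fin d → ℝ) → Measure Ω) (hPθprob : ∀ θ, IsProbabilityMeasure (Pθ θ))
    (hmeas : ∀ E : Set Ω, MeasurableSet E → Measurable fun θ => Pθ θ E)
    (hint : ∀ E : Set Ω, MeasurableSet E → ∫⁻ θ, Pθ θ E ∂(P.map Θ) = P E)
    (hcons : ∀ B : Set (Fin d → ℝ), MeasurableSet B →
      ∀ᵐ θ ∂((P.map Θ).restrict B), Pθ θ (Θ ⁻¹' B) = 1)
    (N : Ω → ℕ) (hN : Measurable N)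
    (a b : (Fin d → ℝ) → ℝ) (ha : Measurable a) (hb : Measurable b)
    (hPanjer : ∀ᵐ θ ∂(P.map Θ), ∀ n : ℕ, 1 ≤ n →
      (Pθ θ {ω | N ω = n}).toReal
        = (a θ + b θ / (n : ℝ)) * (Pθ θ {ω | N ω = n - 1}).toReal) :
    ∀ n : ℕ, 1 ≤ n →
      ((P {ω | N ω = n}).toReal
          = ∫ ω, Set.indicator {ω' | N ω' = n - 1} (fun _ => (1 : ℝ)) ω
              * (a (Θ ω) + b (Θ ω) / (n : ℝ)) ∂P)
      ∧ (P {ω | N ω = n - 1} ≠ 0 →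
          (P {ω | N ω = n}).toReal
            = (∫ ω, (a (Θ ω) + b (Θ ω) / (n : ℝ))
                  ∂((P {ω' | N ω' = n - 1})⁻¹ • P.restrict {ω' | N ω' = n - 1}))
              * (P {ω | N ω = n - 1}).toReal) := by
  intro n hn
  have := hPθprob
  have hκ : IsConsistentCondProb P Θ Pθ := ⟨hmeas, hint, hcons⟩
  have hE' : MeasurableSet {ω | N ω = n - 1} := hN (measurableSet_singleton _)
  have hrec : (P {ω | N ω = n}).toReal
      = ∫ ω in {ω | N ω = n - 1}, a (Θ ω) + b (Θ ω) / (n : ℝ) ∂P := by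
    rw [hκ.toReal_measure_eq_integral (E := {ω | N ω = n}) (hN (measurableSet_singleton n)),
      hκ.setIntegral_comp_eq_integral_toReal_mul hΘ hE'
        (g := fun θ => a θ + b θ / (n : ℝ)) (ha.add (hb.div_const _))]
    refine integral_congr_ae ?_
    filter_upwards [hPanjer] with θ hθ
    rw [hθ n hn, mul_comm]
  refine ⟨?_, fun hne => ?_⟩
  · rw [hrec, ← integral_indicator hE']
    congr 1 with ω
    simp only [Set.indicator_apply, ite_mul, one_mul, zero_mul]
  · have hne_toReal : (P {ω | N ω = n - 1}).toReal ≠ 0 :=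
      ENNReal.toReal_ne_zero.mpr ⟨hne, measure_ne_top _ _⟩
    rw [integral_smul_measure, ← hrec, ENNReal.toReal_inv, smul_eq_mul]
    field_simp

/-- Recursion `P(N = n) = C_n · P(N = n−1)` for members of the mixed
Panjer(a(Θ), b(Θ); 0) class, where `C_n` is the `μ_{n−1}`-expectation of `a(Θ) + b(Θ)/n`. -/
theorem mixed_panjer_pmf_recursion
    {Ω : Type*} [MeasurableSpace Ω] (P : Measure Ω) [IsProbabilityMeasure P]
    (d : ℕ) (hd : 1 ≤ d) (D : Set (Fin d → ℝ)) (hD : MeasurableSet D)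
    (Θ : Ω → (Fin d → ℝ)) (hΘ : Measurable Θ) (hΘD : ∀ ω, Θ ω ∈ D)
    (Pθ : (Fin d → ℝ) → Measure Ω) (hPθprob : ∀ θ, IsProbabilityMeasure (Pθ θ))
    (hmeas : ∀ E : Set Ω, MeasurableSet E → Measurable fun θ => Pθ θ E)
    (hint : ∀ E : Set Ω, MeasurableSet E → ∫⁻ θ, Pθ θ E ∂(P.map Θ) = P E)
    (hcons : ∀ B : Set (Fin d → ℝ), MeasurableSet B →
      ∀ᵐ θ ∂((P.map Θ).restrict B), Pθ θ (Θ ⁻¹' B) = 1)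
    (N : Ω → ℕ) (hN : Measurable N)
    (a b : (Fin d → ℝ) → ℝ) (ha : Measurable a) (hb : Measurable b)
    (hainta : Integrable (fun ω => a (Θ ω)) P)
    (haintb : Integrable (fun ω => b (Θ ω)) P)
    (hPanjer : ∀ᵐ θ ∂(P.map Θ), ∀ n : ℕ, 1 ≤ n →
      (Pθ θ {ω | N ω = n}).toReal
        = (a θ + b θ / (n : ℝ)) * (Pθ θ {ω | N ω = n - 1}).toReal) :
    ∀ n : ℕ, 1 ≤ n →
      ((P {ω | N ω = n}).toReal
          = ∫ ω, Set.indicator {ω' | N ω' = n - 1} (fun _ => (1 : ℝ)) ω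
              * (a (Θ ω) + b (Θ ω) / (n : ℝ)) ∂P)
      ∧ (P {ω | N ω = n - 1} ≠ 0 →
          (P {ω | N ω = n}).toReal
            = (∫ ω, (a (Θ ω) + b (Θ ω) / (n : ℝ))
                  ∂((P {ω' | N ω' = n - 1})⁻¹ • P.restrict {ω' | N ω' = n - 1}))
              * (P {ω | N ω = n - 1}).toReal) :=
  mixed_panjer_pmf_recursion_general P d Θ hΘ Pθ hPθprob hmeas hint hcons N hN a b ha hb hPanjer
end

section
/- Suppose d = 1 and D ⊆ (0, ∞). Assume N, Θ and N·Θ are P-integrable, that N is P_θ-integrable for P_Θ-almost all θ, and that there exists a monotone nondecreasing function h : D → ℝ with h(θ) = ∫_Ω N dP_θ for P_Θ-almost all θ ∈ D. Then E_P[N·Θ] ≥ E_P[N] · E_P[Θ]; that is, the random variables N and Θ are nonnegatively correlated under P. If instead h is monotone nonincreasing, then E_P[N·Θ] ≤ E_P[N] · E_P[Θ]. -/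
open MeasureTheory ProbabilityTheory

/-- Chebyshev-type correlation inequality: if the pairing `(f x - f y) * (g x - g y)` is
nonnegative on a full-measure set `D`, then `f` and `g` are nonnegatively correlated. -/
lemma cheb_aux {μ : Measure ℝ} [IsProbabilityMeasure μ] {D : Set ℝ}
    (hD : MeasurableSet D) (hμD : ∀ᵐ x ∂μ, x ∈ D) {f g : ℝ → ℝ}
    (hf : Integrable f μ) (hg : Integrable g μ)
    (hfg : Integrable (fun x => f x * g x) μ)
    (hpos : ∀ x ∈ D, ∀ y ∈ D, 0 ≤ (f x - f y) * (g x - g y)) :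
    (∫ x, f x ∂μ) * (∫ x, g x ∂μ) ≤ ∫ x, f x * g x ∂μ := by
  set π : Measure (ℝ × ℝ) := μ.prod μ with hπ
  have hmapfst : π.map Prod.fst = μ := by
    rw [hπ, Measure.map_fst_prod]; simp
  have hmapsnd : π.map Prod.snd = μ := by
    rw [hπ, Measure.map_snd_prod]; simp
  -- a.e. both coordinates in D
  have haeD : ∀ᵐ p ∂π, p.1 ∈ D ∧ p.2 ∈ D := by
    have h1 : ∀ᵐ p ∂π, p.1 ∈ D := by
      rw [← hmapfst] at hμD
      exact (MeasureTheory.ae_map_iff measurable_fst.aemeasurable hD).1 hμD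
    have h2 : ∀ᵐ p ∂π, p.2 ∈ D := by
      rw [← hmapsnd] at hμD
      exact (MeasureTheory.ae_map_iff measurable_snd.aemeasurable hD).1 hμD
    exact h1.and h2
  -- integrability of the four pieces
  have i11 : Integrable (fun p : ℝ × ℝ => f p.1 * g p.1) π := by
    have := hfg.aestronglyMeasurable
    rw [← hmapfst] at hfg
    exact (integrable_map_measure (by rwa [hmapfst]) measurable_fst.aemeasurable).1 hfg
  have i22 : Integrable (fun p : ℝ × ℝ => f p.2 * g p.2) π := by
    have := hfg.aestronglyMeasurable
    rw [← hmapsnd] at hfg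
    exact (integrable_map_measure (by rwa [hmapsnd]) measurable_snd.aemeasurable).1 hfg
  have i12 : Integrable (fun p : ℝ × ℝ => f p.1 * g p.2) π := hf.mul_prod hg
  have i21 : Integrable (fun p : ℝ × ℝ => f p.2 * g p.1) π := by
    have := hg.mul_prod hf
    exact this.congr (Filter.Eventually.of_forall fun p => mul_comm _ _)
  -- the key nonnegativity
  have key : 0 ≤ ∫ p, (f p.1 - f p.2) * (g p.1 - g p.2) ∂π := by
    refine integral_nonneg_of_ae ?_
    filter_upwards [haeD] with p hp
    exact hpos p.1 hp.1 p.2 hp.2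
  have hexp : (fun p : ℝ × ℝ => (f p.1 - f p.2) * (g p.1 - g p.2))
      = fun p => (f p.1 * g p.1 + f p.2 * g p.2) - (f p.1 * g p.2 + f p.2 * g p.1) := by
    funext p; ring
  have isum1 : Integrable (fun p : ℝ × ℝ => f p.1 * g p.1 + f p.2 * g p.2) π := by
    exact i11.add i22
  have isum2 : Integrable (fun p : ℝ × ℝ => f p.1 * g p.2 + f p.2 * g p.1) π := by
    exact i12.add i21
  rw [hexp, integral_sub isum1 isum2, integral_add i11 i22, integral_add i12 i21] at key
  have e11 : ∫ p, f p.1 * g p.1 ∂π = ∫ x, f x * g x ∂μ := by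
    rw [hπ, integral_fun_fst (f := fun x => f x * g x)]; simp
  have e22 : ∫ p, f p.2 * g p.2 ∂π = ∫ x, f x * g x ∂μ := by
    rw [hπ, integral_fun_snd (f := fun x => f x * g x)]; simp
  have e12 : ∫ p, f p.1 * g p.2 ∂π = (∫ x, f x ∂μ) * ∫ x, g x ∂μ := by
    rw [hπ]; exact integral_prod_mul f g
  have e21 : ∫ p, f p.2 * g p.1 ∂π = (∫ x, f x ∂μ) * ∫ x, g x ∂μ := by
    have : (fun p : ℝ × ℝ => f p.2 * g p.1) = fun p => g p.1 * f p.2 := by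
      funext p; ring
    rw [this, hπ, integral_prod_mul g f, mul_comm]
  rw [e11, e22, e12, e21] at key
  linarith

/-- If the map `θ ↦ E_{P_θ}[N]` is monotone nondecreasing on `D ⊆ (0, ∞)`,
then `N` and `Θ` are nonnegatively correlated under `P`; if it is nonincreasing, they are
nonpositively correlated. -/
theorem mixed_claim_number_correlation
    {Ω : Type*} [MeasurableSpace Ω] (P : Measure Ω) [IsProbabilityMeasure P]
    (D : Set ℝ) (hD : MeasurableSet D) (hDpos : D ⊆ Set.Ioi (0 : ℝ))
    (Θ : Ω → ℝ) (hΘ : Measurable Θ) (hΘD : ∀ ω, Θ ω ∈ D)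
    (Pθ : ℝ → Measure Ω) (hPθprob : ∀ θ, IsProbabilityMeasure (Pθ θ))
    (hmeas : ∀ E : Set Ω, MeasurableSet E → Measurable fun θ => Pθ θ E)
    (hint : ∀ E : Set Ω, MeasurableSet E → ∫⁻ θ, Pθ θ E ∂(P.map Θ) = P E)
    (hcons : ∀ B : Set ℝ, MeasurableSet B →
      ∀ᵐ θ ∂((P.map Θ).restrict B), Pθ θ (Θ ⁻¹' B) = 1)
    (N : Ω → ℕ) (hN : Measurable N)
    (hNint : Integrable (fun ω => (N ω : ℝ)) P)
    (hΘint : Integrable Θ P)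
    (hNΘint : Integrable (fun ω => (N ω : ℝ) * Θ ω) P)
    (hNθint : ∀ᵐ θ ∂(P.map Θ), Integrable (fun ω => (N ω : ℝ)) (Pθ θ))
    (h : ℝ → ℝ)
    (hh : ∀ᵐ θ ∂(P.map Θ), h θ = ∫ ω, (N ω : ℝ) ∂(Pθ θ)) :
    (MonotoneOn h D →
      (∫ ω, (N ω : ℝ) ∂P) * (∫ ω, Θ ω ∂P) ≤ ∫ ω, (N ω : ℝ) * Θ ω ∂P)
    ∧ (AntitoneOn h D →
      ∫ ω, (N ω : ℝ) * Θ ω ∂P ≤ (∫ ω, (N ω : ℝ) ∂P) * (∫ ω, Θ ω ∂P)) := by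
  set μ : Measure ℝ := P.map Θ with hμdef
  haveI : IsProbabilityMeasure μ := Measure.isProbabilityMeasure_map hΘ.aemeasurable
  set κ : Kernel ℝ Ω := ⟨Pθ, Measure.measurable_of_measurable_coe _ hmeas⟩ with hκdef
  haveI : IsMarkovKernel κ := ⟨fun θ => hPθprob θ⟩
  have hκapp : ∀ θ, κ θ = Pθ θ := fun θ => rfl
  set ρ : Measure (ℝ × Ω) := μ.compProd κ with hρdef
  -- P is the second marginal of ρ
  have hPmap : ρ.map Prod.snd = P := by
    ext E hE
    rw [Measure.map_apply measurable_snd hE, hρdef,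
      Measure.compProd_apply (measurable_snd hE)]
    have : ∀ θ, κ θ (Prod.mk θ ⁻¹' (Prod.snd ⁻¹' E)) = Pθ θ E := fun θ => rfl
    simp_rw [this]
    exact hint E hE
  -- key: ρ (B ×ˢ Θ⁻¹ Bᶜ) = 0
  have key : ∀ B : Set ℝ, MeasurableSet B → ρ (B ×ˢ (Θ ⁻¹' Bᶜ)) = 0 := by
    intro B hB
    rw [hρdef, Measure.compProd_apply_prod hB (hΘ hB.compl)]
    have h0 : ∀ᵐ θ ∂(μ.restrict B), κ θ (Θ ⁻¹' Bᶜ) = 0 := by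
      filter_upwards [hcons B hB] with θ hθ
      have : Θ ⁻¹' Bᶜ = (Θ ⁻¹' B)ᶜ := rfl
      rw [hκapp, this, measure_compl (hΘ hB) (measure_ne_top _ _), hθ]
      haveI := hPθprob θ
      simp
    rw [lintegral_congr_ae h0, lintegral_zero]
  -- a.e. on ρ, the first coordinate equals Θ of the second
  have hdiag : ∀ᵐ p ∂ρ, p.1 = Θ p.2 := by
    rw [Filter.eventually_iff, mem_ae_iff]
    have hsub : {p : ℝ × Ω | p.1 = Θ p.2}ᶜ ⊆
        ⋃ q : ℚ, ((Set.Iio (q : ℝ) ×ˢ (Θ ⁻¹' (Set.Iio (q : ℝ))ᶜ)) ∪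
          (Set.Ioi (q : ℝ) ×ˢ (Θ ⁻¹' (Set.Ioi (q : ℝ))ᶜ))) := by
      intro p hp
      simp only [Set.mem_compl_iff, Set.mem_setOf_eq] at hp
      rcases lt_or_gt_of_ne hp with hlt | hgt
      · obtain ⟨q, h1, h2⟩ := exists_rat_btwn hlt
        exact Set.mem_iUnion.2 ⟨q, Or.inl ⟨h1, fun hc => absurd hc (not_lt.2 h2.le)⟩⟩
      · obtain ⟨q, h1, h2⟩ := exists_rat_btwn hgt
        exact Set.mem_iUnion.2 ⟨q, Or.inr ⟨h2, fun hc => absurd hc (not_lt.2 h1.le)⟩⟩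
    exact measure_mono_null hsub
      (measure_iUnion_null fun q : ℚ => measure_union_null
        (key _ measurableSet_Iio) (key _ measurableSet_Ioi))
  have hae : ∀ᵐ θ ∂μ, ∀ᵐ ω ∂(κ θ), θ = Θ ω := Measure.ae_ae_of_ae_compProd hdiag
  -- transfer of integrals/integrability from P to ρ
  have intsnd : ∀ {F : Ω → ℝ}, Integrable F P → Integrable (fun p : ℝ × Ω => F p.2) ρ := by
    intro F hF
    have hFm : AEStronglyMeasurable F (ρ.map Prod.snd) := by
      rw [hPmap]; exact hF.aestronglyMeasurable
    rw [← hPmap] at hF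
    exact (integrable_map_measure hFm measurable_snd.aemeasurable).1 hF
  have intF : ∀ {F : Ω → ℝ}, Integrable F P →
      ∫ ω, F ω ∂P = ∫ θ, ∫ ω, F ω ∂(κ θ) ∂μ := by
    intro F hF
    have h1 : ∫ ω, F ω ∂P = ∫ p : ℝ × Ω, F p.2 ∂ρ := by
      rw [← hPmap]
      exact integral_map measurable_snd.aemeasurable
        (by rw [hPmap]; exact hF.aestronglyMeasurable)
    rw [h1, hρdef, Measure.integral_compProd (intsnd hF)]
  -- integrability of the conditional means
  have intG : ∀ {F : Ω → ℝ}, Integrable F P → (∀ ω, 0 ≤ F ω) →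
      Integrable (fun θ => ∫ ω, F ω ∂(κ θ)) μ := by
    intro F hF hF0
    have hρi := intsnd hF
    have := ((Measure.integrable_compProd_iff hρi.aestronglyMeasurable).1 hρi).2
    refine this.congr (Filter.Eventually.of_forall fun θ => ?_)
    exact integral_congr_ae (Filter.Eventually.of_forall fun ω =>
      Real.norm_of_nonneg (hF0 ω))
  have intGN : Integrable (fun θ => ∫ ω, (N ω : ℝ) ∂(κ θ)) μ :=
    intG hNint fun ω => Nat.cast_nonneg _
  have intGNΘ : Integrable (fun θ => ∫ ω, (N ω : ℝ) * Θ ω ∂(κ θ)) μ :=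
    intG hNΘint fun ω => mul_nonneg (Nat.cast_nonneg _) (le_of_lt (hDpos (hΘD ω)))
  -- hh as EventuallyEq w.r.t. κ
  have hhκ : ∀ᵐ θ ∂μ, h θ = ∫ ω, (N ω : ℝ) ∂(κ θ) := hh
  have hNθintκ : ∀ᵐ θ ∂μ, Integrable (fun ω => (N ω : ℝ)) (κ θ) := hNθint
  -- a.e. identification of the conditional mean of N * Θ
  have hG2 : ∀ᵐ θ ∂μ, (∫ ω, (N ω : ℝ) * Θ ω ∂(κ θ)) = h θ * θ := by
    filter_upwards [hae, hhκ, hNθintκ] with θ h1 h2 h3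
    have e1 : (∫ ω, (N ω : ℝ) * Θ ω ∂(κ θ)) = ∫ ω, (N ω : ℝ) * θ ∂(κ θ) := by
      refine integral_congr_ae ?_
      filter_upwards [h1] with ω hω
      rw [← hω]
    rw [e1, integral_mul_const, ← h2]
  -- integrability on μ
  have inth : Integrable h μ :=
    intGN.congr (hhκ.mono fun θ e => e.symm)
  have inthg : Integrable (fun x => h x * x) μ := intGNΘ.congr hG2
  have intid : Integrable (fun x : ℝ => x) μ := by
    rw [hμdef]
    exact (integrable_map_measure aestronglyMeasurable_id hΘ.aemeasurable).2 hΘint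
  have hDae : ∀ᵐ x ∂μ, x ∈ D := by
    rw [hμdef]
    exact (MeasureTheory.ae_map_iff hΘ.aemeasurable hD).2 (Filter.Eventually.of_forall hΘD)
  -- integral identities
  have EN : ∫ ω, (N ω : ℝ) ∂P = ∫ x, h x ∂μ := by
    rw [intF hNint]
    exact integral_congr_ae (hhκ.mono fun θ e => e.symm)
  have ENΘ : ∫ ω, (N ω : ℝ) * Θ ω ∂P = ∫ x, h x * x ∂μ := by
    rw [intF hNΘint]
    exact integral_congr_ae hG2
  have EΘ : ∫ ω, Θ ω ∂P = ∫ x, x ∂μ := by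
    rw [hμdef]
    exact (integral_map hΘ.aemeasurable aestronglyMeasurable_id).symm
  constructor
  · intro hm
    rw [EN, ENΘ, EΘ]
    refine cheb_aux hD hDae inth intid inthg ?_
    intro x hx y hy
    rcases le_total x y with hxy | hxy
    · have := hm hx hy hxy
      nlinarith
    · have := hm hy hx hxy
      nlinarith
  · intro hm
    rw [EN, ENΘ, EΘ]
    have := cheb_aux hD hDae inth.neg intid
      (inthg.neg.congr (Filter.Eventually.of_forall fun x => by simp [neg_mul]))
      (f := fun x => -h x) (g := fun x : ℝ => x) ?_
    · rw [integral_neg] at this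
      have e : ∫ x, -h x * x ∂μ = -∫ x, h x * x ∂μ := by
        rw [← integral_neg]
        exact integral_congr_ae (Filter.Eventually.of_forall fun x => by ring)
      rw [e] at this
      linarith
    · intro x hx y hy
      rcases le_total x y with hxy | hxy
      · have := hm hx hy hxy
        nlinarith
      · have := hm hy hx hxy
        nlinarith
end

section
/- Suppose the X_j take values in ℕ, let a, b : D → ℝ be Borel measurable with a∘Θ and b∘Θ P-integrable, write f_θ(k) := P_θ(X_1 = k), and assume that for P_Θ-almost all θ ∈ D: (1) under P_θ the sequence X is independent and identically distributed; (2) σ(N) and σ(X_1, X_2, …) are independent under P_θ; (3) P_θ(N = n) = (a(θ) + b(θ)/n) · P_θ(N = n − 1) for every integer n ≥ 1; and (4) a(θ) · f_θ(0) < 1. Then for every integer x ≥ 1, P(S = x) = Σ_{y=1}^{x} ∫_Ω 1_{{S = x − y}}(ω) · (a(Θ(ω)) + b(Θ(ω))·y/x) · f_{Θ(ω)}(y) / (1 − a(Θ(ω)) · f_{Θ(ω)}(0)) dP(ω). -/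
/-!
Given `Θ = θ`, the aggregate claim `S` is a compound sum with i.i.d. claims and a claim number in
the Panjer class `(a θ, b θ; 0)`, so the classical Panjer recursion holds under `P_θ`. Its proof
combines the convolution `P(X₀ + ⋯ + Xₙ = x) = ∑ f(y) P(X₀ + ⋯ + Xₙ₋₁ = x - y)` with the
size-biasing identity `x P(X₀ + ⋯ + Xₙ₋₁ = x) = n ∑ y f(y) P(X₀ + ⋯ + Xₙ₋₂ = x - y)`, which comes
from exchangeability. Integrating over `θ` gives the mixed recursion: since `P_θ` is carried by
`{Θ = θ}` (the Borel σ-algebra being countably separated), `∫ c(θ) P_θ(E) dP_Θ = ∫_E c(Θ) dP`.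
The summands are integrable, being bounded by `|a θ| + |b θ|`; for `a θ ≥ 1` this holds because
summability of the claim number distribution then forces `N = 0` almost surely.
-/

open MeasureTheory ProbabilityTheory Finset
open scoped ENNReal

namespace Panjer

section IndependentSums

variable {Ω : Type*} [MeasurableSpace Ω] {μ : Measure Ω}

lemma measure_add_eq_sum_mul {U V : Ω → ℕ} (hU : Measurable U) (hV : Measurable V)
    (hUV : IndepFun U V μ) (w : ℕ) :
    μ {ω | U ω + V ω = w} = ∑ y ∈ range (w + 1), μ (U ⁻¹' {y}) * μ (V ⁻¹' {w - y}) := by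
  have hset : {ω | U ω + V ω = w} = ⋃ y ∈ range (w + 1), U ⁻¹' {y} ∩ V ⁻¹' {w - y} := by
    ext ω
    simp only [Set.mem_ofPred_eq, Set.mem_iUnion, Set.mem_inter_iff, Set.mem_preimage,
      Set.mem_singleton_iff, mem_range, exists_prop]
    constructor
    · intro h
      exact ⟨U ω, by omega, rfl, by omega⟩
    · rintro ⟨y, hy, rfl, h⟩
      omega
  rw [hset, measure_biUnion_finset]
  · exact sum_congr rfl fun y _ ↦
      hUV.measure_inter_preimage_eq_mul _ _ (.singleton y) (.singleton (w - y))
  · exact fun y _ y' _ hne ↦ Set.disjoint_left.2 fun ω h h' ↦ hne (h.1.symm.trans h'.1)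
  · exact fun y _ ↦ (hU (.singleton y)).inter (hV (.singleton (w - y)))

variable {X : ℕ → Ω → ℕ}

lemma measure_preimage_singleton_eq (hX : ∀ j, Measurable (X j))
    (hident : ∀ j, μ.map (X j) = μ.map (X 0)) (j y : ℕ) :
    μ (X j ⁻¹' {y}) = μ (X 0 ⁻¹' {y}) := by
  rw [← Measure.map_apply (hX j) (.singleton y), ← Measure.map_apply (hX 0) (.singleton y),
    hident j]

lemma indepFun_sum_of_notMem (hX : ∀ j, Measurable (X j)) (hindep : iIndepFun X μ)
    {s : Finset ℕ} {i : ℕ} (hi : i ∉ s) : IndepFun (X i) (fun ω ↦ ∑ j ∈ s, X j ω) μ := by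
  simpa only [Finset.sum_fn] using (hindep.indepFun_finsetSum_of_notMem hX hi).symm

lemma measure_add_sum_eq_sum_mul (hX : ∀ j, Measurable (X j)) (hindep : iIndepFun X μ)
    {s : Finset ℕ} {i : ℕ} (hi : i ∉ s) (w : ℕ) :
    μ {ω | X i ω + ∑ j ∈ s, X j ω = w}
      = ∑ y ∈ range (w + 1), μ (X i ⁻¹' {y}) * μ {ω | ∑ j ∈ s, X j ω = w - y} :=
  measure_add_eq_sum_mul (hX i) (Finset.measurable_sum s fun j _ ↦ hX j)
    (indepFun_sum_of_notMem hX hindep hi) w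

lemma measure_sum_eq_measure_sum_range_card (hX : ∀ j, Measurable (X j))
    (hindep : iIndepFun X μ) (hident : ∀ j, μ.map (X j) = μ.map (X 0)) (s : Finset ℕ) (w : ℕ) :
    μ {ω | ∑ j ∈ s, X j ω = w} = μ {ω | ∑ j ∈ range #s, X j ω = w} := by
  induction s using Finset.induction_on generalizing w with
  | empty => simp
  | @insert i s hi ih =>
    simp_rw [card_insert_of_notMem hi, sum_insert hi, sum_range_succ_comm]
    rw [measure_add_sum_eq_sum_mul hX hindep hi,
      measure_add_sum_eq_sum_mul hX hindep notMem_range_self]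
    refine sum_congr rfl fun y _ ↦ ?_
    rw [measure_preimage_singleton_eq hX hident i, measure_preimage_singleton_eq hX hident #s, ih]

lemma measure_sum_range_succ_eq (hX : ∀ j, Measurable (X j)) (hindep : iIndepFun X μ)
    (hident : ∀ j, μ.map (X j) = μ.map (X 0)) (n z : ℕ) :
    μ {ω | ∑ j ∈ range (n + 1), X j ω = z}
      = ∑ y ∈ range (z + 1), μ (X 0 ⁻¹' {y}) * μ {ω | ∑ j ∈ range n, X j ω = z - y} := by
  conv_lhs => simp only [sum_range_succ_comm]
  rw [measure_add_sum_eq_sum_mul hX hindep notMem_range_self]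
  simp_rw [measure_preimage_singleton_eq hX hident n]

lemma setLIntegral_natCast_eq_sum {Y : Ω → ℕ} (hY : Measurable Y) {A : Set Ω}
    (hA : MeasurableSet A) {z : ℕ} (hle : ∀ ω ∈ A, Y ω ≤ z) :
    ∫⁻ ω in A, (Y ω : ℝ≥0∞) ∂μ = ∑ y ∈ range (z + 1), (y : ℝ≥0∞) * μ (A ∩ Y ⁻¹' {y}) := by
  have hpt : ∀ ω ∈ A,
      (Y ω : ℝ≥0∞) = ∑ y ∈ range (z + 1), (Y ⁻¹' {y}).indicator (fun _ ↦ (y : ℝ≥0∞)) ω := by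
    intro ω hω
    rw [sum_eq_single_of_mem (Y ω) (mem_range.2 (Nat.lt_succ_of_le (hle ω hω)))]
    · simp
    · intro y _ hy
      simp [Ne.symm hy]
  rw [setLIntegral_congr_fun hA hpt,
    lintegral_finsetSum _ fun y _ ↦ measurable_const.indicator (hY (.singleton y))]
  refine sum_congr rfl fun y _ ↦ ?_
  rw [lintegral_indicator_const (hY (.singleton y)), Measure.restrict_apply (hY (.singleton y)),
    Set.inter_comm]

lemma measure_sum_range_inter_eq (hX : ∀ j, Measurable (X j)) (hindep : iIndepFun X μ)
    (hident : ∀ j, μ.map (X j) = μ.map (X 0)) {n j : ℕ} (hj : j ∈ range n) {y z : ℕ}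
    (hyz : y ≤ z) :
    μ ({ω | ∑ i ∈ range n, X i ω = z} ∩ X j ⁻¹' {y})
      = μ (X 0 ⁻¹' {y}) * μ {ω | ∑ i ∈ range (n - 1), X i ω = z - y} := by
  have hset : {ω | ∑ i ∈ range n, X i ω = z} ∩ X j ⁻¹' {y}
      = X j ⁻¹' {y} ∩ (fun ω ↦ ∑ i ∈ (range n).erase j, X i ω) ⁻¹' {z - y} := by
    ext ω
    simp only [Set.mem_inter_iff, Set.mem_ofPred_eq, Set.mem_preimage, Set.mem_singleton_iff,
      ← add_sum_erase _ (fun i ↦ X i ω) hj]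
    omega
  rw [hset, (indepFun_sum_of_notMem hX hindep (notMem_erase j _)).measure_inter_preimage_eq_mul
    _ _ (.singleton y) (.singleton (z - y)), measure_preimage_singleton_eq hX hident j]
  congr 1
  exact (measure_sum_eq_measure_sum_range_card hX hindep hident _ _).trans
    (by rw [card_erase_of_mem hj, card_range])

lemma natCast_mul_measure_sum_range_eq (hX : ∀ j, Measurable (X j)) (hindep : iIndepFun X μ)
    (hident : ∀ j, μ.map (X j) = μ.map (X 0)) (n z : ℕ) :
    (z : ℝ≥0∞) * μ {ω | ∑ j ∈ range n, X j ω = z}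
      = n * ∑ y ∈ range (z + 1),
          y * (μ (X 0 ⁻¹' {y}) * μ {ω | ∑ j ∈ range (n - 1), X j ω = z - y}) := by
  set A := {ω | ∑ j ∈ range n, X j ω = z}
  have hA : MeasurableSet A := Finset.measurable_sum _ (fun j _ ↦ hX j) (.singleton z)
  have hle : ∀ j ∈ range n, ∀ ω ∈ A, X j ω ≤ z := fun j hj ω hω ↦
    hω ▸ single_le_sum (f := fun i ↦ X i ω) (fun i _ ↦ Nat.zero_le _) hj
  calc (z : ℝ≥0∞) * μ A = ∫⁻ ω in A, ∑ j ∈ range n, (X j ω : ℝ≥0∞) ∂μ := by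
        rw [← setLIntegral_const]
        refine setLIntegral_congr_fun hA fun ω hω ↦ ?_
        rw [← hω]
        push_cast
        rfl
    _ = ∑ j ∈ range n, ∫⁻ ω in A, (X j ω : ℝ≥0∞) ∂μ :=
        lintegral_finsetSum _ fun j _ ↦ measurable_from_top.comp (hX j)
    _ = ∑ j ∈ range n, ∑ y ∈ range (z + 1), (y : ℝ≥0∞) * μ (A ∩ X j ⁻¹' {y}) :=
        sum_congr rfl fun j hj ↦ setLIntegral_natCast_eq_sum (hX j) hA (hle j hj)
    _ = ∑ _j ∈ range n, ∑ y ∈ range (z + 1),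
          (y : ℝ≥0∞) * (μ (X 0 ⁻¹' {y}) * μ {ω | ∑ j ∈ range (n - 1), X j ω = z - y}) :=
        sum_congr rfl fun j hj ↦ sum_congr rfl fun y hy ↦ by
          rw [measure_sum_range_inter_eq hX hindep hident hj (Nat.lt_succ_iff.1 (mem_range.1 hy))]
    _ = _ := by rw [sum_const, card_range, nsmul_eq_mul]

end IndependentSums

section RandomSums

variable {Ω : Type*} [MeasurableSpace Ω] {μ : Measure Ω} {N : Ω → ℕ} {X : ℕ → Ω → ℕ}

lemma measurable_sum_range (hN : Measurable N) (hX : ∀ j, Measurable (X j)) :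
    Measurable fun ω ↦ ∑ j ∈ range (N ω), X j ω :=
  (measurable_from_prod_countable_left (f := fun p : Ω × ℕ ↦ ∑ j ∈ range p.2, X j p.1)
    fun n ↦ Finset.measurable_sum (range n) fun j _ ↦ hX j).comp (measurable_id.prodMk hN)

lemma measure_sum_range_eq_tsum (hN : Measurable N) (hX : ∀ j, Measurable (X j))
    (hNX : Indep (MeasurableSpace.comap N inferInstance)
      (MeasurableSpace.comap (fun ω k ↦ X k ω) inferInstance) μ) (z : ℕ) :
    μ {ω | ∑ j ∈ range (N ω), X j ω = z}
      = ∑' n, μ {ω | N ω = n} * μ {ω | ∑ j ∈ range n, X j ω = z} := by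
  have hset : {ω | ∑ j ∈ range (N ω), X j ω = z}
      = ⋃ n, {ω | N ω = n} ∩ {ω | ∑ j ∈ range n, X j ω = z} := by
    ext ω
    simp
  rw [hset, measure_iUnion]
  · refine tsum_congr fun n ↦ (hNX.indepSet_of_measurableSet ?_ ?_).measure_inter_eq_mul
    · exact ⟨{n}, .singleton n, rfl⟩
    · exact ⟨{v | ∑ j ∈ range n, v j = z},
        Finset.measurable_sum _ (fun j _ ↦ measurable_pi_apply j) (.singleton z), rfl⟩
  · exact fun n m hnm ↦ Set.disjoint_left.2 fun ω h h' ↦ hnm (h.1.symm.trans h'.1)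
  · exact fun n ↦ (hN (.singleton n)).inter
      (Finset.measurable_sum _ (fun j _ ↦ hX j) (.singleton z))

lemma hasSum_measureReal_sum_range [IsFiniteMeasure μ] (hN : Measurable N)
    (hX : ∀ j, Measurable (X j))
    (hNX : Indep (MeasurableSpace.comap N inferInstance)
      (MeasurableSpace.comap (fun ω k ↦ X k ω) inferInstance) μ) (z : ℕ) :
    HasSum (fun n ↦ μ.real {ω | N ω = n} * μ.real {ω | ∑ j ∈ range n, X j ω = z})
      (μ.real {ω | ∑ j ∈ range (N ω), X j ω = z}) := by
  have h := measure_sum_range_eq_tsum hN hX hNX z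
  have hfin : ∑' n, μ {ω | N ω = n} * μ {ω | ∑ j ∈ range n, X j ω = z} ≠ ∞ :=
    h ▸ measure_ne_top _ _
  simp only [measureReal_def, ← ENNReal.toReal_mul]
  rw [h, ENNReal.tsum_toReal_eq fun n ↦ ENNReal.mul_ne_top (measure_ne_top _ _)
    (measure_ne_top _ _)]
  exact ENNReal.hasSum_toReal hfin

end RandomSums

def PanjerClass (a b : ℝ) (p : ℕ → ℝ) : Prop :=
  ∀ n : ℕ, 1 ≤ n → p n = (a + b / n) * p (n - 1)

lemma PanjerClass.eq_zero_of_one_le {a b : ℝ} {p : ℕ → ℝ} (h : PanjerClass a b p)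
    (hp : ∀ n, 0 ≤ p n) (hsum : Summable p) (ha : 1 ≤ a) (n : ℕ) : p (n + 1) = 0 := by
  have hp1 : p 1 = 0 := by
    by_contra hne
    have hp1 : p 1 = (a + b) * p 0 := by simpa using h 1 le_rfl
    have hab : 0 < a + b := by
      by_contra! hab
      exact hne (le_antisymm (hp1 ▸ mul_nonpos_of_nonpos_of_nonneg hab (hp 0)) (hp 1))
    -- `n ↦ n * p n` is nondecreasing, so `p` dominates a multiple of the harmonic series
    have hharm : ∀ n : ℕ, p 1 ≤ ((n + 1 : ℕ) : ℝ) * p (n + 1) := by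
      intro n
      induction n with
      | zero => simp
      | succ n ih =>
        rw [h (n + 1 + 1) (by omega), Nat.add_sub_cancel]
        push_cast at ih ⊢
        have hn : (0 : ℝ) ≤ n := n.cast_nonneg
        calc p 1 ≤ ((n : ℝ) + 1) * p (n + 1) := ih
          _ ≤ ((a - 1) * ((n : ℝ) + 1) + a + b + ((n : ℝ) + 1)) * p (n + 1) := by
            have : 0 ≤ ((a - 1) * ((n : ℝ) + 1) + a + b) * p (n + 1) :=
              mul_nonneg (by nlinarith) (hp (n + 1))
            linarith
          _ = ((n : ℝ) + 1 + 1) * ((a + b / ((n : ℝ) + 1 + 1)) * p (n + 1)) := by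
            field_simp
            ring
    have hsum' : Summable fun n : ℕ ↦ p 1 * ((n + 1 : ℕ) : ℝ)⁻¹ := by
      refine ((summable_nat_add_iff 1).2 hsum).of_nonneg_of_le (fun n ↦ ?_) (fun n ↦ ?_)
      · exact mul_nonneg (hp 1) (inv_nonneg.2 (Nat.cast_nonneg _))
      · rw [← div_eq_mul_inv, div_le_iff₀' (by positivity)]
        exact hharm n
    exact Real.not_summable_natCast_inv
      ((summable_nat_add_iff 1).1 ((summable_mul_left_iff hne).1 hsum'))
  induction n with
  | zero => exact hp1
  | succ n ih => rw [h (n + 1 + 1) (by omega), Nat.add_sub_cancel, ih, mul_zero]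

section PanjerRecursion

variable {Ω : Type*} [MeasurableSpace Ω] {μ : Measure Ω}
  {N : Ω → ℕ} {X : ℕ → Ω → ℕ} {a b : ℝ}

lemma measureReal_sum_range_succ_eq [IsFiniteMeasure μ] (hX : ∀ j, Measurable (X j))
    (hindep : iIndepFun X μ) (hident : ∀ j, μ.map (X j) = μ.map (X 0)) (n z : ℕ) :
    μ.real {ω | ∑ j ∈ range (n + 1), X j ω = z}
      = ∑ y ∈ range (z + 1),
          μ.real {ω | X 0 ω = y} * μ.real {ω | ∑ j ∈ range n, X j ω = z - y} := by
  simp only [measureReal_def, ← ENNReal.toReal_mul]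
  rw [← ENNReal.toReal_sum fun y _ ↦ ENNReal.mul_ne_top (measure_ne_top _ _) (measure_ne_top _ _)]
  exact congrArg ENNReal.toReal (measure_sum_range_succ_eq hX hindep hident n z)

lemma natCast_mul_measureReal_sum_range_eq [IsFiniteMeasure μ] (hX : ∀ j, Measurable (X j))
    (hindep : iIndepFun X μ) (hident : ∀ j, μ.map (X j) = μ.map (X 0)) (n z : ℕ) :
    (z : ℝ) * μ.real {ω | ∑ j ∈ range n, X j ω = z}
      = n * ∑ y ∈ range (z + 1),
          y * (μ.real {ω | X 0 ω = y} * μ.real {ω | ∑ j ∈ range (n - 1), X j ω = z - y}) := by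
  simp only [measureReal_def, ← ENNReal.toReal_mul, ← ENNReal.toReal_natCast]
  rw [← ENNReal.toReal_sum fun y _ ↦ ENNReal.mul_ne_top (ENNReal.natCast_ne_top y)
    (ENNReal.mul_ne_top (measure_ne_top _ _) (measure_ne_top _ _)), ← ENNReal.toReal_mul]
  exact congrArg ENNReal.toReal (natCast_mul_measure_sum_range_eq hX hindep hident n z)

lemma PanjerClass.mul_measureReal_sum_range_succ_eq [IsFiniteMeasure μ]
    (hX : ∀ j, Measurable (X j)) (hindep : iIndepFun X μ)
    (hident : ∀ j, μ.map (X j) = μ.map (X 0))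
    (hpanjer : PanjerClass a b fun n ↦ μ.real {ω | N ω = n}) {x : ℕ} (hx : 1 ≤ x) (n : ℕ) :
    μ.real {ω | N ω = n + 1} * μ.real {ω | ∑ j ∈ range (n + 1), X j ω = x}
      = ∑ y ∈ range (x + 1), (a + b * y / x) * μ.real {ω | X 0 ω = y}
          * (μ.real {ω | N ω = n} * μ.real {ω | ∑ j ∈ range n, X j ω = x - y}) := by
  set p : ℕ → ℝ := fun n ↦ μ.real {ω | N ω = n}
  set f : ℕ → ℝ := fun y ↦ μ.real {ω | X 0 ω = y}
  set G : ℕ → ℕ → ℝ := fun n z ↦ μ.real {ω | ∑ j ∈ range n, X j ω = z}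
  have hconv : G (n + 1) x = ∑ y ∈ range (x + 1), f y * G n (x - y) :=
    measureReal_sum_range_succ_eq hX hindep hident n x
  have hbias : (x : ℝ) * G (n + 1) x = (n + 1) * ∑ y ∈ range (x + 1), y * (f y * G n (x - y)) := by
    simpa using natCast_mul_measureReal_sum_range_eq hX hindep hident (n + 1) x
  have hp : p (n + 1) = (a + b / (n + 1)) * p n := by
    simpa using hpanjer (n + 1) (by omega)
  have hx0 : (x : ℝ) ≠ 0 := by positivity
  calc p (n + 1) * G (n + 1) x
      = a * p n * G (n + 1) x + b / x * p n * (x * G (n + 1) x / (n + 1)) := by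
        rw [hp]
        field_simp
    _ = a * p n * ∑ y ∈ range (x + 1), f y * G n (x - y)
        + b / x * p n * ∑ y ∈ range (x + 1), y * (f y * G n (x - y)) := by
        rw [hbias, ← hconv]
        field_simp
    _ = _ := by
        rw [mul_sum, mul_sum, ← sum_add_distrib]
        exact sum_congr rfl fun y _ ↦ by ring

theorem panjer_identity [IsFiniteMeasure μ] (hN : Measurable N)
    (hX : ∀ j, Measurable (X j)) (hindep : iIndepFun X μ)
    (hident : ∀ j, μ.map (X j) = μ.map (X 0))
    (hNX : Indep (MeasurableSpace.comap N inferInstance)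
      (MeasurableSpace.comap (fun ω k ↦ X k ω) inferInstance) μ)
    (hpanjer : PanjerClass a b fun n ↦ μ.real {ω | N ω = n}) {x : ℕ} (hx : 1 ≤ x) :
    μ.real {ω | ∑ j ∈ range (N ω), X j ω = x}
      = ∑ y ∈ range (x + 1), (a + b * y / x) * μ.real {ω | X 0 ω = y}
          * μ.real {ω | ∑ j ∈ range (N ω), X j ω = x - y} := by
  have hsum := hasSum_measureReal_sum_range hN hX hNX
  have htail : HasSum
      (fun n ↦ μ.real {ω | N ω = n + 1} * μ.real {ω | ∑ j ∈ range (n + 1), X j ω = x})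
      (μ.real {ω | ∑ j ∈ range (N ω), X j ω = x}) := by
    have hG0 : μ.real {ω | ∑ j ∈ range 0, X j ω = x} = 0 := by
      simp [(Nat.one_le_iff_ne_zero.1 hx).symm]
    have h := (hasSum_nat_add_iff' 1).2 (hsum x)
    rwa [sum_range_one, hG0, mul_zero, sub_zero] at h
  refine htail.unique ?_
  simp_rw [hpanjer.mul_measureReal_sum_range_succ_eq hX hindep hident hx]
  exact hasSum_sum fun y _ ↦ (hsum (x - y)).mul_left _

theorem panjer_recursion [IsFiniteMeasure μ] (hN : Measurable N)
    (hX : ∀ j, Measurable (X j)) (hindep : iIndepFun X μ)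
    (hident : ∀ j, μ.map (X j) = μ.map (X 0))
    (hNX : Indep (MeasurableSpace.comap N inferInstance)
      (MeasurableSpace.comap (fun ω k ↦ X k ω) inferInstance) μ)
    (hpanjer : PanjerClass a b fun n ↦ μ.real {ω | N ω = n})
    (hnd : a * μ.real {ω | X 0 ω = 0} < 1) {x : ℕ} (hx : 1 ≤ x) :
    μ.real {ω | ∑ j ∈ range (N ω), X j ω = x}
      = ∑ y ∈ Icc 1 x, (a + b * y / x) * μ.real {ω | X 0 ω = y}
          / (1 - a * μ.real {ω | X 0 ω = 0}) * μ.real {ω | ∑ j ∈ range (N ω), X j ω = x - y} := by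
  have h := panjer_identity hN hX hindep hident hNX hpanjer hx
  rw [range_eq_Ico, sum_eq_sum_Ico_succ_bot (by omega), zero_add,
    Ico_add_one_right_eq_Icc] at h
  simp only [Nat.cast_zero, mul_zero, zero_div, add_zero, Nat.sub_zero] at h
  have hd : 0 < 1 - a * μ.real {ω | X 0 ω = 0} := by linarith
  simp only [div_mul_eq_mul_div, ← sum_div]
  rw [eq_div_iff hd.ne']
  linarith

lemma PanjerClass.mul_measureReal_sum_range_eq_zero [IsProbabilityMeasure μ]
    (hN : Measurable N) (hX : ∀ j, Measurable (X j))
    (hNX : Indep (MeasurableSpace.comap N inferInstance)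
      (MeasurableSpace.comap (fun ω k ↦ X k ω) inferInstance) μ)
    (hpanjer : PanjerClass a b fun n ↦ μ.real {ω | N ω = n}) (ha : 1 ≤ a) {x y : ℕ}
    (hy : y ∈ Icc 1 x) :
    (a + b * y / x) * μ.real {ω | ∑ j ∈ range (N ω), X j ω = x - y} = 0 := by
  have hp := hpanjer.eq_zero_of_one_le (fun _ ↦ measureReal_nonneg)
    (summable_measure_toReal (fun n ↦ hN (.singleton n))
      fun n m hnm ↦ Set.disjoint_left.2 fun ω h h' ↦ hnm (h.symm.trans h')) ha
  have hg : ∀ z, μ.real {ω | ∑ j ∈ range (N ω), X j ω = z}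
      = μ.real {ω | N ω = 0} * μ.real {ω | ∑ j ∈ range 0, X j ω = z} := fun z ↦
    (hasSum_measureReal_sum_range hN hX hNX z).unique <| hasSum_single 0 fun n hn ↦ by
      obtain ⟨m, rfl⟩ := Nat.exists_eq_succ_of_ne_zero hn
      rw [hp m, zero_mul]
  obtain ⟨hy1, hyx⟩ := mem_Icc.1 hy
  rcases hyx.lt_or_eq with hlt | rfl
  · simp [hg, (Nat.sub_ne_zero_of_lt hlt).symm]
  · have h1 : μ.real {ω | N ω = 1} = (a + b) * μ.real {ω | N ω = 0} := by
      simpa using hpanjer 1 le_rfl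
    have hy0 : (y : ℝ) ≠ 0 := by positivity
    rw [mul_div_cancel_right₀ b hy0, Nat.sub_self, hg]
    simp [← h1, hp 0]

lemma abs_panjer_term_le [IsProbabilityMeasure μ] (hN : Measurable N)
    (hX : ∀ j, Measurable (X j))
    (hNX : Indep (MeasurableSpace.comap N inferInstance)
      (MeasurableSpace.comap (fun ω k ↦ X k ω) inferInstance) μ)
    (hpanjer : PanjerClass a b fun n ↦ μ.real {ω | N ω = n})
    (hnd : a * μ.real {ω | X 0 ω = 0} < 1) {x y : ℕ} (hy : y ∈ Icc 1 x) :
    |(a + b * y / x) * μ.real {ω | X 0 ω = y} / (1 - a * μ.real {ω | X 0 ω = 0})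
        * μ.real {ω | ∑ j ∈ range (N ω), X j ω = x - y}| ≤ |a| + |b| := by
  set f₀ := μ.real {ω | X 0 ω = 0}
  set f := μ.real {ω | X 0 ω = y}
  set g := μ.real {ω | ∑ j ∈ range (N ω), X j ω = x - y}
  obtain ⟨hy1, hyx⟩ := mem_Icc.1 hy
  rcases lt_or_ge a 1 with ha | ha
  · have hd : 0 < 1 - a * f₀ := by linarith
    have hcoef : |a + b * y / x| ≤ |a| + |b| := by
      have hyx' : (y : ℝ) / x ≤ 1 := div_le_one_of_le₀ (by exact_mod_cast hyx) (by positivity)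
      calc |a + b * y / x| ≤ |a| + |b| * (y / x) := by
            rw [mul_div_assoc]
            refine (abs_add_le _ _).trans_eq ?_
            rw [abs_mul, abs_of_nonneg (by positivity : (0 : ℝ) ≤ y / x)]
        _ ≤ |a| + |b| := by nlinarith [abs_nonneg b]
    have hf : f ≤ 1 - a * f₀ := by
      have hdisj : Disjoint {ω | X 0 ω = y} {ω | X 0 ω = 0} :=
        Set.disjoint_left.2 fun ω (h : X 0 ω = y) (h' : X 0 ω = 0) ↦ by omega
      have hsum : f + f₀ ≤ 1 :=
        (measureReal_union hdisj ((hX 0) (.singleton 0))).symm.trans_le measureReal_le_one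
      nlinarith [measureReal_nonneg (μ := μ) (s := {ω | X 0 ω = 0})]
    rw [abs_mul, abs_div, abs_mul, abs_of_nonneg (measureReal_nonneg : 0 ≤ f),
      abs_of_pos hd, abs_of_nonneg (measureReal_nonneg : 0 ≤ g), mul_div_assoc]
    calc |a + b * y / x| * (f / (1 - a * f₀)) * g ≤ (|a| + |b|) * 1 * 1 := by
          gcongr
          · exact (div_le_one hd).2 hf
          · exact measureReal_le_one
      _ = |a| + |b| := by ring
  · rw [show (a + b * y / x) * f / (1 - a * f₀) * g = f / (1 - a * f₀) * ((a + b * y / x) * g)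
      by ring, hpanjer.mul_measureReal_sum_range_eq_zero hN hX hNX ha hy, mul_zero, abs_zero]
    positivity

end PanjerRecursion

section RegularConditionalProbability

variable {Ω α : Type*} [MeasurableSpace Ω] [MeasurableSpace α] {P : Measure Ω} {Θ : Ω → α}
  {Pθ : α → Measure Ω}

lemma ae_ae_eq_of_forall_measure_preimage_eq_one [MeasurableSpace.CountablySeparated α]
    [∀ θ, IsProbabilityMeasure (Pθ θ)] (hΘ : Measurable Θ)
    (hcons : ∀ B : Set α, MeasurableSet B → ∀ᵐ θ ∂((P.map Θ).restrict B), Pθ θ (Θ ⁻¹' B) = 1) :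
    ∀ᵐ θ ∂(P.map Θ), ∀ᵐ ω ∂(Pθ θ), Θ ω = θ := by
  obtain ⟨S, hSc, hSm, hsep⟩ := exists_countable_separating α MeasurableSet Set.univ
  have hfull : ∀ θ, ∀ B, MeasurableSet B → Pθ θ (Θ ⁻¹' B) = 1 → ∀ᵐ ω ∂(Pθ θ), Θ ω ∈ B :=
    fun θ B hB h ↦ mem_ae_iff.2 ((prob_compl_eq_zero_iff (hΘ hB)).2 h)
  have hS : ∀ᵐ θ ∂(P.map Θ), ∀ s ∈ S, ∀ᵐ ω ∂(Pθ θ), Θ ω ∈ s ↔ θ ∈ s := by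
    refine (ae_ball_iff hSc).2 fun s hs ↦ ?_
    filter_upwards [ae_imp_of_ae_restrict (hcons s (hSm s hs)),
      ae_imp_of_ae_restrict (hcons sᶜ (hSm s hs).compl)] with θ hin hout
    by_cases hθ : θ ∈ s
    · filter_upwards [hfull θ s (hSm s hs) (hin hθ)] with ω hω
      exact iff_of_true hω hθ
    · filter_upwards [hfull θ sᶜ (hSm s hs).compl (hout hθ)] with ω hω
      exact iff_of_false hω hθ
  filter_upwards [hS] with θ hθ
  filter_upwards [(ae_ball_iff hSc).2 hθ] with ω hω
  exact hsep _ trivial _ trivial hω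

lemma map_restrict_eq_withDensity (hΘ : Measurable Θ)
    (hint : ∀ E : Set Ω, MeasurableSet E → ∫⁻ θ, Pθ θ E ∂(P.map Θ) = P E)
    (hdirac : ∀ᵐ θ ∂(P.map Θ), ∀ᵐ ω ∂(Pθ θ), Θ ω = θ) {E : Set Ω} (hE : MeasurableSet E) :
    (P.restrict E).map Θ = (P.map Θ).withDensity fun θ ↦ Pθ θ E := by
  ext B hB
  rw [Measure.map_apply hΘ hB, Measure.restrict_apply (hΘ hB), withDensity_apply _ hB,
    Set.inter_comm, ← hint _ (hE.inter (hΘ hB)), ← lintegral_indicator hB]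
  refine lintegral_congr_ae (hdirac.mono fun θ hθ ↦ ?_)
  beta_reduce
  by_cases hθB : θ ∈ B
  · rw [Set.indicator_of_mem hθB, measure_inter_conull]
    exact measure_eq_zero_iff_ae_notMem.2 (hθ.mono fun ω hω h ↦ h (by simpa [hω] using hθB))
  · rw [Set.indicator_of_notMem hθB]
    exact measure_mono_null Set.inter_subset_right
      (measure_eq_zero_iff_ae_notMem.2 (hθ.mono fun ω hω h ↦ hθB (by simpa [hω] using h)))

lemma integral_indicator_mul_comp_eq [∀ θ, IsFiniteMeasure (Pθ θ)] (hΘ : Measurable Θ)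
    (hmeas : ∀ E : Set Ω, MeasurableSet E → Measurable fun θ ↦ Pθ θ E)
    (hint : ∀ E : Set Ω, MeasurableSet E → ∫⁻ θ, Pθ θ E ∂(P.map Θ) = P E)
    (hdirac : ∀ᵐ θ ∂(P.map Θ), ∀ᵐ ω ∂(Pθ θ), Θ ω = θ) {E : Set Ω} (hE : MeasurableSet E)
    {c : α → ℝ} (hc : Measurable c) :
    ∫ ω, E.indicator (fun _ ↦ (1 : ℝ)) ω * c (Θ ω) ∂P = ∫ θ, c θ * (Pθ θ).real E ∂(P.map Θ) := by
  have hind : ∀ ω,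
      E.indicator (fun _ ↦ (1 : ℝ)) ω * c (Θ ω) = E.indicator (fun ω ↦ c (Θ ω)) ω := fun ω ↦ by
    by_cases h : ω ∈ E <;> simp [h]
  rw [integral_congr_ae (ae_of_all _ hind), integral_indicator hE,
    ← integral_map hΘ.aemeasurable hc.aestronglyMeasurable,
    map_restrict_eq_withDensity hΘ hint hdirac hE,
    integral_withDensity_eq_integral_toReal_smul ?_ (ae_of_all _ fun θ ↦ measure_lt_top _ _)]
  · simp_rw [smul_eq_mul, mul_comm, measureReal_def]
  · exact hmeas E hE

lemma measureReal_eq_integral [∀ θ, IsFiniteMeasure (Pθ θ)]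
    (hmeas : ∀ E : Set Ω, MeasurableSet E → Measurable fun θ ↦ Pθ θ E)
    (hint : ∀ E : Set Ω, MeasurableSet E → ∫⁻ θ, Pθ θ E ∂(P.map Θ) = P E)
    {E : Set Ω} (hE : MeasurableSet E) :
    P.real E = ∫ θ, (Pθ θ).real E ∂(P.map Θ) := by
  rw [measureReal_def, ← hint E hE, ← integral_toReal (hmeas E hE).aemeasurable
    (ae_of_all _ fun θ ↦ measure_lt_top _ _)]
  rfl

end RegularConditionalProbability

end Panjer

open Panjer

theorem mixed_compound_panjer_recursion_general
    {Ω : Type*} [MeasurableSpace Ω] (P : Measure Ω) [IsProbabilityMeasure P]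
    (d : ℕ)
    (Θ : Ω → (Fin d → ℝ)) (hΘ : Measurable Θ)
    (Pθ : (Fin d → ℝ) → Measure Ω) (hPθprob : ∀ θ, IsProbabilityMeasure (Pθ θ))
    (hmeas : ∀ E : Set Ω, MeasurableSet E → Measurable fun θ => Pθ θ E)
    (hint : ∀ E : Set Ω, MeasurableSet E → ∫⁻ θ, Pθ θ E ∂(P.map Θ) = P E)
    (hcons : ∀ B : Set (Fin d → ℝ), MeasurableSet B →
      ∀ᵐ θ ∂((P.map Θ).restrict B), Pθ θ (Θ ⁻¹' B) = 1)
    (N : Ω → ℕ) (hN : Measurable N)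
    (X : ℕ → Ω → ℕ) (hX : ∀ j, Measurable (X j))
    (a b : (Fin d → ℝ) → ℝ) (ha : Measurable a) (hb : Measurable b)
    (hainta : Integrable (fun ω => a (Θ ω)) P)
    (haintb : Integrable (fun ω => b (Θ ω)) P)
    (hae : ∀ᵐ θ ∂(P.map Θ),
      -- (1) conditionally i.i.d. claim sizes
      (iIndepFun X (Pθ θ)
        ∧ ∀ j : ℕ, (Pθ θ).map (X j) = (Pθ θ).map (X 0))
      -- (2) conditional independence of claim number and claim sizes
      ∧ Indep (MeasurableSpace.comap N inferInstance)
          (MeasurableSpace.comap (fun ω (k : ℕ) => X k ω) inferInstance) (Pθ θ)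
      -- (3) Panjer recursion for the conditional claim number distribution
      ∧ (∀ n : ℕ, 1 ≤ n →
          (Pθ θ {ω | N ω = n}).toReal
            = (a θ + b θ / (n : ℝ)) * (Pθ θ {ω | N ω = n - 1}).toReal)
      -- (4) nondegeneracy
      ∧ a θ * (Pθ θ {ω | X 0 ω = 0}).toReal < 1) :
    ∀ x : ℕ, 1 ≤ x →
      (P {ω | (∑ j ∈ Finset.range (N ω), X j ω) = x}).toReal
        = ∑ y ∈ Finset.Icc 1 x,
            ∫ ω, Set.indicator {ω' | (∑ j ∈ Finset.range (N ω'), X j ω') = x - y}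
                (fun _ => (1 : ℝ)) ω
              * (a (Θ ω) + b (Θ ω) * (y : ℝ) / (x : ℝ))
              * (Pθ (Θ ω) {ω' | X 0 ω' = y}).toReal
              / (1 - a (Θ ω) * (Pθ (Θ ω) {ω' | X 0 ω' = 0}).toReal) ∂P := by
  intro x hx
  have hdirac := ae_ae_eq_of_forall_measure_preimage_eq_one hΘ hcons
  have hS : ∀ z : ℕ, MeasurableSet {ω | ∑ j ∈ range (N ω), X j ω = z} :=
    fun z ↦ measurable_sum_range hN hX (.singleton z)
  set c : ℕ → (Fin d → ℝ) → ℝ := fun y θ ↦ (a θ + b θ * y / x) * (Pθ θ).real {ω | X 0 ω = y}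
    / (1 - a θ * (Pθ θ).real {ω | X 0 ω = 0})
  have hc : ∀ y, Measurable (c y) := fun y ↦
    ((ha.add ((hb.mul_const _).div_const _)).mul (hmeas _ (hX 0 (.singleton y))).ennreal_toReal).div
      (measurable_const.sub (ha.mul (hmeas _ (hX 0 (.singleton 0))).ennreal_toReal))
  have hbound : Integrable (fun θ ↦ |a θ| + |b θ|) (P.map Θ) :=
    ((integrable_map_measure ha.aestronglyMeasurable hΘ.aemeasurable).2 hainta).abs.add
      ((integrable_map_measure hb.aestronglyMeasurable hΘ.aemeasurable).2 haintb).abs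
  calc P.real {ω | ∑ j ∈ range (N ω), X j ω = x}
      = ∫ θ, (Pθ θ).real {ω | ∑ j ∈ range (N ω), X j ω = x} ∂(P.map Θ) :=
        measureReal_eq_integral hmeas hint (hS x)
    _ = ∫ θ, ∑ y ∈ Icc 1 x, c y θ * (Pθ θ).real {ω | ∑ j ∈ range (N ω), X j ω = x - y}
          ∂(P.map Θ) :=
        integral_congr_ae <| hae.mono fun θ ⟨⟨hindep, hident⟩, hNX, hpanjer, hnd⟩ ↦
          panjer_recursion hN hX hindep hident hNX hpanjer hnd hx
    _ = ∑ y ∈ Icc 1 x, ∫ θ, c y θ * (Pθ θ).real {ω | ∑ j ∈ range (N ω), X j ω = x - y}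
          ∂(P.map Θ) := by
        refine integral_finsetSum _ fun y hy ↦ hbound.mono'
          ((hc y).mul (hmeas _ (hS _)).ennreal_toReal).aestronglyMeasurable ?_
        filter_upwards [hae] with θ hθ
        exact abs_panjer_term_le hN hX hθ.2.1 hθ.2.2.1 hθ.2.2.2 hy
    _ = _ := by
        refine sum_congr rfl fun y _ ↦ ?_
        rw [← integral_indicator_mul_comp_eq hΘ hmeas hint hdirac (hS _) (hc y)]
        simp only [c, mul_div_assoc, mul_assoc]
        rfl

/-- Panjer-type recursion for the pmf of the aggregate claims of a mixed
compound distribution whose claim number distribution lies in `Panjer(a(Θ), b(Θ); 0)`: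
for `x ≥ 1`,
`P(S = x) = Σ_{y=1}^{x} ∫ 1_{S = x−y} · (a(Θ) + b(Θ)y/x) · f_Θ(y)/(1 − a(Θ) f_Θ(0)) dP`. -/
theorem mixed_compound_panjer_recursion
    {Ω : Type*} [MeasurableSpace Ω] (P : Measure Ω) [IsProbabilityMeasure P]
    (d : ℕ) (hd : 1 ≤ d) (D : Set (Fin d → ℝ)) (hD : MeasurableSet D)
    (Θ : Ω → (Fin d → ℝ)) (hΘ : Measurable Θ) (hΘD : ∀ ω, Θ ω ∈ D)
    (Pθ : (Fin d → ℝ) → Measure Ω) (hPθprob : ∀ θ, IsProbabilityMeasure (Pθ θ))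
    (hmeas : ∀ E : Set Ω, MeasurableSet E → Measurable fun θ => Pθ θ E)
    (hint : ∀ E : Set Ω, MeasurableSet E → ∫⁻ θ, Pθ θ E ∂(P.map Θ) = P E)
    (hcons : ∀ B : Set (Fin d → ℝ), MeasurableSet B →
      ∀ᵐ θ ∂((P.map Θ).restrict B), Pθ θ (Θ ⁻¹' B) = 1)
    (N : Ω → ℕ) (hN : Measurable N)
    (X : ℕ → Ω → ℕ) (hX : ∀ j, Measurable (X j))
    (a b : (Fin d → ℝ) → ℝ) (ha : Measurable a) (hb : Measurable b)
    (hainta : Integrable (fun ω => a (Θ ω)) P)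
    (haintb : Integrable (fun ω => b (Θ ω)) P)
    (hae : ∀ᵐ θ ∂(P.map Θ),
      -- (1) conditionally i.i.d. claim sizes
      (iIndepFun X (Pθ θ)
        ∧ ∀ j : ℕ, (Pθ θ).map (X j) = (Pθ θ).map (X 0))
      -- (2) conditional independence of claim number and claim sizes
      ∧ Indep (MeasurableSpace.comap N inferInstance)
          (MeasurableSpace.comap (fun ω (k : ℕ) => X k ω) inferInstance) (Pθ θ)
      -- (3) Panjer recursion for the conditional claim number distribution
      ∧ (∀ n : ℕ, 1 ≤ n →
          (Pθ θ {ω | N ω = n}).toReal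
            = (a θ + b θ / (n : ℝ)) * (Pθ θ {ω | N ω = n - 1}).toReal)
      -- (4) nondegeneracy
      ∧ a θ * (Pθ θ {ω | X 0 ω = 0}).toReal < 1) :
    ∀ x : ℕ, 1 ≤ x →
      (P {ω | (∑ j ∈ Finset.range (N ω), X j ω) = x}).toReal
        = ∑ y ∈ Finset.Icc 1 x,
            ∫ ω, Set.indicator {ω' | (∑ j ∈ Finset.range (N ω'), X j ω') = x - y}
                (fun _ => (1 : ℝ)) ω
              * (a (Θ ω) + b (Θ ω) * (y : ℝ) / (x : ℝ))
              * (Pθ (Θ ω) {ω' | X 0 ω' = y}).toReal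
              / (1 - a (Θ ω) * (Pθ (Θ ω) {ω' | X 0 ω' = 0}).toReal) ∂P :=
  mixed_compound_panjer_recursion_general P d Θ hΘ Pθ hPθprob hmeas hint hcons N hN X hX a b ha hb
    hainta haintb hae
end

section
/- Suppose the X_j take values in ℕ, let a, b ∈ ℝ be constants, write f_θ(k) := P_θ(X_1 = k), and assume: P(N = n) = (a + b/n) · P(N = n − 1) for every integer n ≥ 1, and for P_Θ-almost all θ ∈ D: (1) P_θ(N = n) = P(N = n) for all n ∈ ℕ; (2) under P_θ the sequence X is independent and identically distributed; (3) σ(N) and σ(X_1, X_2, …) are independent under P_θ; (4) a · f_θ(0) < 1. Then P(S = 0) = Σ_{n=0}^∞ P(N = n) · ∫_D (f_θ(0))^n dP_Θ(θ), and for every integer x ≥ 1, P(S = x) = Σ_{y=1}^{x} (a + b·y/x) · ∫_Ω 1_{{S = x − y}}(ω) · f_{Θ(ω)}(y) / (1 − a · f_{Θ(ω)}(0)) dP(ω). -/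
/-!
Given `Θ = θ`, the aggregate claim `S` is a compound sum of i.i.d. summands independent of `N`, so
its law is `∑ₙ qₙ f_θ^{*n}`. Comparing coefficients in `(Fⁿ⁺¹)' = (n + 1) Fⁿ F'` for the
generating function `F` of `f_θ` gives `x f^{*(n+1)}(x) = (n + 1) ∑_y y f(y) f^{*n}(x - y)`, which
together with `q_{n+1} = (a + b/(n+1)) q_n` and `f^{*(n+1)} = f * f^{*n}` turns the series into
the Panjer recursion for `P_θ(S = ·)`. Integrating against `P_Θ` gives the theorem, since the consistency of
the regular conditional probability means that `Θ` pushes `P` restricted to `E` forward to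
`P_Θ` with density `θ ↦ P_θ(E)`.

The terms of the recursion are integrable in `θ`: for `a ≤ 1` because
`f_θ(y) ≤ 1 - f_θ(0) ≤ 1 - a f_θ(0)`, and for `a > 1` because then the ratio test forces
`P(N ≥ 1) = 0` and `a + b = 0`, which makes every term vanish.
-/

open MeasureTheory ProbabilityTheory
open Filter Finset Function PowerSeries

theorem PowerSeries.natCast_mul_coeff_pow_succ {R : Type*} [CommSemiring R] (φ : R⟦X⟧) (n x : ℕ) :
    (x : R) * coeff x (φ ^ (n + 1))
      = (n + 1) * ∑ p ∈ antidiagonal x, (p.1 : R) * coeff p.1 φ * coeff p.2 (φ ^ n) := by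
  rcases x with _ | m
  · simp
  have h := coeff_derivative (φ ^ (n + 1)) m
  rw [derivative_pow, add_tsub_cancel_right, mul_assoc, mul_comm (φ ^ n),
    ← map_natCast (C (R := R)), coeff_C_mul, coeff_mul] at h
  rw [Nat.sum_antidiagonal_succ, mul_comm, Nat.cast_succ, ← h]
  simp [coeff_derivative, mul_comm, mul_left_comm]

theorem Finset.Nat.sum_antidiagonal_eq_add_sum_Icc {M : Type*} [AddCommMonoid M]
    (h : ℕ → ℕ → M) (x : ℕ) :
    ∑ p ∈ antidiagonal x, h p.1 p.2 = h 0 x + ∑ y ∈ Icc 1 x, h y (x - y) := by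
  rw [Nat.sum_antidiagonal_eq_sum_range_succ, sum_range_succ', add_comm, Nat.sub_zero,
    range_eq_Ico, sum_Ico_add' (fun y => h y (x - y)), zero_add, Ico_add_one_right_eq_Icc]

theorem abs_div_one_sub_mul_le_one {a u v : ℝ} (ha : a ≤ 1) (hu : 0 ≤ u) (hv : 0 ≤ v)
    (huv : u + v ≤ 1) : |v / (1 - a * u)| ≤ 1 := by
  have hvu : v ≤ 1 - a * u := by nlinarith
  rw [abs_of_nonneg (div_nonneg hv (hv.trans hvu))]
  exact div_le_one_of_le₀ hvu (hv.trans hvu)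

/-- The claim-number law `q` belongs to the Panjer class `(a, b; 0)`. -/
def IsPanjer (a b : ℝ) (q : ℕ → ℝ) : Prop :=
  ∀ n : ℕ, q (n + 1) = (a + b / (n + 1)) * q n

/-- The compound law `∑ₙ q n • f^{*n}`, the `n`-fold convolution power `f^{*n}` being read off
the coefficients of `(mk f)^n`. -/
noncomputable def compoundDist (q f : ℕ → ℝ) (x : ℕ) : ℝ :=
  ∑' n, q n * coeff x (mk f ^ n)

namespace IsPanjer

variable {a b : ℝ} {q : ℕ → ℝ}

theorem mul_coeff_pow_succ (hq : IsPanjer a b q) (f : ℕ → ℝ) (n : ℕ) {x : ℕ} (hx : x ≠ 0) :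
    q (n + 1) * coeff x (mk f ^ (n + 1))
      = q n * ∑ p ∈ antidiagonal x, (a + b * p.1 / x) * f p.1 * coeff p.2 (mk f ^ n) := by
  have hconv : coeff x (mk f ^ (n + 1)) = ∑ p ∈ antidiagonal x, f p.1 * coeff p.2 (mk f ^ n) := by
    rw [pow_succ', coeff_mul]
    simp only [coeff_mk]
  have hsym := natCast_mul_coeff_pow_succ (mk f) n x
  simp only [coeff_mk] at hsym
  have hsplit : ∑ p ∈ antidiagonal x, (a + b * p.1 / x) * f p.1 * coeff p.2 (mk f ^ n)
      = a * ∑ p ∈ antidiagonal x, f p.1 * coeff p.2 (mk f ^ n)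
        + b / x * ∑ p ∈ antidiagonal x, (p.1 : ℝ) * f p.1 * coeff p.2 (mk f ^ n) := by
    rw [mul_sum, mul_sum, ← sum_add_distrib]
    exact sum_congr rfl fun p _ => by ring
  have hx' : (x : ℝ) ≠ 0 := Nat.cast_ne_zero.mpr hx
  rw [hq n, hsplit, ← hconv]
  field_simp
  linear_combination b * q n * hsym

theorem compoundDist_eq (hq : IsPanjer a b q) {f : ℕ → ℝ}
    (hs : ∀ z, Summable fun n => q n * coeff z (mk f ^ n)) {x : ℕ} (hx : x ≠ 0) :
    compoundDist q f x
      = ∑ p ∈ antidiagonal x, (a + b * p.1 / x) * f p.1 * compoundDist q f p.2 := by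
  unfold compoundDist
  rw [(hs x).tsum_eq_zero_add, pow_zero, coeff_one, if_neg hx, mul_zero, zero_add]
  have hs' : ∀ p ∈ antidiagonal x, Summable fun n =>
      (a + b * p.1 / x) * f p.1 * (q n * coeff p.2 (mk f ^ n)) :=
    fun p _ => (hs p.2).mul_left _
  simp_rw [hq.mul_coeff_pow_succ f _ hx, ← tsum_mul_left, ← Summable.tsum_finsetSum hs', mul_sum]
  exact tsum_congr fun n => sum_congr rfl fun p _ => by ring

theorem compoundDist_eq_sum_Icc (hq : IsPanjer a b q) {f : ℕ → ℝ}
    (hs : ∀ z, Summable fun n => q n * coeff z (mk f ^ n)) (hf : a * f 0 < 1)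
    {x : ℕ} (hx : x ≠ 0) :
    compoundDist q f x = ∑ y ∈ Icc 1 x,
      (a + b * y / x) * (compoundDist q f (x - y) * (f y / (1 - a * f 0))) := by
  have h := hq.compoundDist_eq hs hx
  rw [Nat.sum_antidiagonal_eq_add_sum_Icc (fun y z => (a + b * y / x) * f y * compoundDist q f z)]
    at h
  simp only [Nat.cast_zero, mul_zero, zero_div, add_zero] at h
  have h' : compoundDist q f x * (1 - a * f 0)
      = ∑ y ∈ Icc 1 x, (a + b * y / x) * f y * compoundDist q f (x - y) := by
    linear_combination h
  rw [(eq_div_iff (by linarith)).mpr h', sum_div]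
  exact sum_congr rfl fun y _ => by ring

theorem eq_zero_of_one_lt (hq : IsPanjer a b q) (hq0 : ∀ n, 0 ≤ q n) (hs : Summable q)
    (ha : 1 < a) (n : ℕ) : q (n + 1) = 0 := by
  have h1 : q 1 = 0 := by
    by_contra hne
    have h10 : q 1 = (a + b) * q 0 := by simpa using hq 0
    have hab : 0 < a + b := pos_of_mul_pos_left (h10 ▸ (hq0 1).lt_of_ne' hne) (hq0 0)
    have hc : ∀ n : ℕ, 0 < a + b / (n + 1) := fun n => by
      rcases le_or_gt 0 b with hb | hb
      · positivity
      · have : b ≤ b / (n + 1) := by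
          rw [le_div_iff₀ (by positivity)]
          nlinarith [n.cast_nonneg (α := ℝ)]
        linarith
    have hpos : ∀ n, 0 < q n := fun n => by
      induction n with
      | zero => exact pos_of_mul_pos_right (h10 ▸ (hq0 1).lt_of_ne' hne) hab.le
      | succ n ih => exact hq n ▸ mul_pos (hc n) ih
    refine not_summable_of_ratio_test_tendsto_gt_one ha ?_ hs
    have hlim : Tendsto (fun n : ℕ => a + b / ((n : ℝ) + 1)) atTop (nhds a) := by
      simpa using tendsto_const_nhds.add
        ((tendsto_const_div_atTop_nhds_zero_nat b).comp (tendsto_add_atTop_nat 1))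
    refine hlim.congr fun n => ?_
    rw [Real.norm_of_nonneg (hpos _).le, Real.norm_of_nonneg (hpos _).le, hq n,
      mul_div_cancel_right₀ _ (hpos n).ne']
  induction n with
  | zero => exact h1
  | succ n ih => rw [hq, ih, mul_zero]

theorem add_eq_zero_of_one_lt (hq : IsPanjer a b q) (hq0 : ∀ n, 0 ≤ q n) (hs : HasSum q 1)
    (ha : 1 < a) : a + b = 0 := by
  have hsucc := hq.eq_zero_of_one_lt hq0 hs.summable ha
  have h0 : q 0 = 1 := by
    rw [← hs.tsum_eq, tsum_eq_single 0 fun n hn => ?_]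
    obtain ⟨m, rfl⟩ := Nat.exists_eq_succ_of_ne_zero hn
    exact hsucc m
  simpa [hsucc 0, h0] using (hq 0).symm

end IsPanjer

theorem integral_tsum_mul_pow {E : Type*} [MeasurableSpace E] {ν : Measure E} [IsFiniteMeasure ν]
    {q : ℕ → ℝ} (hq : Summable q) {h : E → ℝ} (hm : Measurable h) (hh : ∀ᵐ θ ∂ν, |h θ| ≤ 1) :
    ∫ θ, ∑' n, q n * h θ ^ n ∂ν = ∑' n, q n * ∫ θ, h θ ^ n ∂ν := by
  have hbound : ∀ n, ∀ᵐ θ ∂ν, ‖q n * h θ ^ n‖ ≤ ‖q n‖ := fun n => by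
    filter_upwards [hh] with θ hθ
    rw [norm_mul, norm_pow]
    exact mul_le_of_le_one_right (norm_nonneg _) (pow_le_one₀ (norm_nonneg _) hθ)
  have hint : ∀ n, Integrable (fun θ => q n * h θ ^ n) ν := fun n =>
    Integrable.of_bound ((hm.pow_const n).const_mul _).aestronglyMeasurable _ (hbound n)
  have hnorm : Summable fun n => ∫ θ, ‖q n * h θ ^ n‖ ∂ν := by
    refine Summable.of_nonneg_of_le (fun n => integral_nonneg fun _ => norm_nonneg _)
      (fun n => ?_) (hq.norm.mul_left (ν.real Set.univ))
    simpa using integral_mono_ae (hint n).norm (integrable_const _) (hbound n)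
  simp_rw [← integral_tsum_of_summable_integral_norm hint hnorm, integral_const_mul]

section SumsOfNatValuedVariables

variable {Ω : Type*} [MeasurableSpace Ω] {μ : Measure Ω}

theorem hasSum_measureReal_iUnion {ι : Type*} [Countable ι] [IsFiniteMeasure μ] {A : ι → Set Ω}
    (hA : ∀ i, MeasurableSet (A i)) (hd : Pairwise (Disjoint on A)) :
    HasSum (fun i => μ.real (A i)) (μ.real (⋃ i, A i)) := by
  have h := ENNReal.hasSum_toReal (f := fun i => μ (A i))
    (by rw [← measure_iUnion hd hA]; exact measure_ne_top _ _)
  rwa [← ENNReal.tsum_toReal_eq fun i => measure_ne_top _ _, ← measure_iUnion hd hA] at h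

theorem hasSum_measureReal_preimage_singleton [IsProbabilityMeasure μ] {N : Ω → ℕ}
    (hN : Measurable N) : HasSum (fun n => μ.real {ω | N ω = n}) 1 := by
  have h := hasSum_measureReal_iUnion (μ := μ) (fun n => hN (measurableSet_singleton n))
    fun m n hmn => Set.disjoint_left.mpr fun ω h₁ h₂ => hmn (h₁.symm.trans h₂)
  rwa [← Set.preimage_iUnion, Set.iUnion_of_singleton, Set.preimage_univ, probReal_univ] at h

theorem ProbabilityTheory.IndepFun.measureReal_add_eq_sum_antidiagonal [IsFiniteMeasure μ]
    {U V : Ω → ℕ} (hU : Measurable U) (hV : Measurable V) (h : IndepFun U V μ) (x : ℕ) :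
    μ.real {ω | U ω + V ω = x}
      = ∑ p ∈ antidiagonal x, μ.real {ω | U ω = p.1} * μ.real {ω | V ω = p.2} := by
  have hset : {ω | U ω + V ω = x} = ⋃ p ∈ antidiagonal x, U ⁻¹' {p.1} ∩ V ⁻¹' {p.2} := by
    ext ω
    simp
  rw [hset, measureReal_biUnion_finset]
  · refine sum_congr rfl fun p _ => ?_
    rw [measureReal_def, h.measure_inter_preimage_eq_mul _ _ (measurableSet_singleton _)
      (measurableSet_singleton _), ENNReal.toReal_mul]
    rfl
  · intro p _ p' _ hpp'
    refine Set.disjoint_left.mpr fun ω h₁ h₂ => hpp' (Prod.ext ?_ ?_)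
    · exact h₁.1.symm.trans h₂.1
    · exact h₁.2.symm.trans h₂.2
  · exact fun p _ => (hU (measurableSet_singleton _)).inter (hV (measurableSet_singleton _))

theorem ProbabilityTheory.iIndepFun.measureReal_sum_range_eq_coeff_pow [IsProbabilityMeasure μ]
    {X : ℕ → Ω → ℕ} (hX : ∀ j, Measurable (X j)) (h : iIndepFun X μ)
    (hident : ∀ j, μ.map (X j) = μ.map (X 0)) (n x : ℕ) :
    μ.real {ω | ∑ j ∈ range n, X j ω = x}
      = coeff x (mk (fun y => μ.real {ω | X 0 ω = y}) ^ n) := by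
  induction n generalizing x with
  | zero =>
    rcases eq_or_ne x 0 with rfl | hx
    · simp
    · simp [coeff_one, hx, Ne.symm hx]
  | succ n ih =>
    have hdist : ∀ y, μ.real {ω | X n ω = y} = μ.real {ω | X 0 ω = y} := fun y => by
      have hy := map_measureReal_apply (μ := μ) (hX n) (measurableSet_singleton y)
      rw [hident n, map_measureReal_apply (hX 0) (measurableSet_singleton y)] at hy
      exact hy.symm
    have hind := h.indepFun_sum_range_succ hX n
    rw [sum_fn] at hind
    have := hind.measureReal_add_eq_sum_antidiagonal (measurable_sum _ fun j _ => hX j) (hX n) x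
    simp only [sum_range_succ, this, pow_succ, coeff_mul, ih, hdist, coeff_mk]

end SumsOfNatValuedVariables

def compoundSum {Ω : Type*} (N : Ω → ℕ) (X : ℕ → Ω → ℕ) (ω : Ω) : ℕ :=
  ∑ j ∈ range (N ω), X j ω

theorem setOf_compoundSum_eq {Ω : Type*} {N : Ω → ℕ} {X : ℕ → Ω → ℕ} (z : ℕ) :
    {ω | compoundSum N X ω = z} = ⋃ n, {ω | N ω = n} ∩ {ω | ∑ j ∈ range n, X j ω = z} := by
  ext ω
  simp [compoundSum]

section CompoundSum

variable {Ω : Type*} [MeasurableSpace Ω] {μ : Measure Ω} {N : Ω → ℕ} {X : ℕ → Ω → ℕ}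

theorem measurable_compoundSum (hN : Measurable N) (hX : ∀ j, Measurable (X j)) :
    Measurable (compoundSum N X) := by
  refine measurable_to_countable' fun z => ?_
  change MeasurableSet {ω | compoundSum N X ω = z}
  rw [setOf_compoundSum_eq]
  exact .iUnion fun n => (hN (measurableSet_singleton n)).inter
    ((measurable_sum _ fun j _ => hX j) (measurableSet_singleton z))

theorem hasSum_measureReal_compoundSum [IsProbabilityMeasure μ] (hN : Measurable N)
    (hX : ∀ j, Measurable (X j)) (hiid : iIndepFun X μ) (hident : ∀ j, μ.map (X j) = μ.map (X 0))
    (hind : Indep (MeasurableSpace.comap N inferInstance)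
      (MeasurableSpace.comap (fun ω k => X k ω) inferInstance) μ) (z : ℕ) :
    HasSum (fun n => μ.real {ω | N ω = n} * coeff z (mk (fun y => μ.real {ω | X 0 ω = y}) ^ n))
      (μ.real {ω | compoundSum N X ω = z}) := by
  rw [setOf_compoundSum_eq]
  convert hasSum_measureReal_iUnion (μ := μ)
    (A := fun n => {ω | N ω = n} ∩ {ω | ∑ j ∈ range n, X j ω = z})
    (fun n => (hN (measurableSet_singleton n)).inter
      ((measurable_sum _ fun j _ => hX j) (measurableSet_singleton z))) ?_ using 1
  · funext n
    have hSn : MeasurableSet[MeasurableSpace.comap (fun ω k => X k ω) inferInstance]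
        {ω | ∑ j ∈ range n, X j ω = z} :=
      ⟨{h | ∑ j ∈ range n, h j = z},
        (measurable_sum _ fun j _ => measurable_pi_apply j) (measurableSet_singleton z), rfl⟩
    have h := (Indep_iff _ _ _).mp hind _ _ ⟨{n}, measurableSet_singleton n, rfl⟩ hSn
    rw [← hiid.measureReal_sum_range_eq_coeff_pow hX hident]
    exact ((congrArg ENNReal.toReal h).trans ENNReal.toReal_mul).symm
  · exact fun m n hmn => Set.disjoint_left.mpr fun ω h₁ h₂ => hmn (h₁.1.symm.trans h₂.1)

theorem measureReal_compoundSum_eq_zero_eq_tsum [IsProbabilityMeasure μ] (hN : Measurable N)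
    (hX : ∀ j, Measurable (X j)) (hiid : iIndepFun X μ) (hident : ∀ j, μ.map (X j) = μ.map (X 0))
    (hind : Indep (MeasurableSpace.comap N inferInstance)
      (MeasurableSpace.comap (fun ω k => X k ω) inferInstance) μ) :
    μ.real {ω | compoundSum N X ω = 0}
      = ∑' n, μ.real {ω | N ω = n} * μ.real {ω | X 0 ω = 0} ^ n := by
  rw [← (hasSum_measureReal_compoundSum hN hX hiid hident hind 0).tsum_eq]
  simp [coeff_zero_eq_constantCoeff_apply]

theorem measureReal_compoundSum_eq_sum_Icc [IsProbabilityMeasure μ] (hN : Measurable N)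
    (hX : ∀ j, Measurable (X j)) (hiid : iIndepFun X μ) (hident : ∀ j, μ.map (X j) = μ.map (X 0))
    (hind : Indep (MeasurableSpace.comap N inferInstance)
      (MeasurableSpace.comap (fun ω k => X k ω) inferInstance) μ)
    {a b : ℝ} {q : ℕ → ℝ} (hqN : ∀ n, μ.real {ω | N ω = n} = q n) (hq : IsPanjer a b q)
    (h0 : a * μ.real {ω | X 0 ω = 0} < 1) {x : ℕ} (hx : x ≠ 0) :
    μ.real {ω | compoundSum N X ω = x} = ∑ y ∈ Icc 1 x, (a + b * y / x) *
      (μ.real {ω | compoundSum N X ω = x - y}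
        * (μ.real {ω | X 0 ω = y} / (1 - a * μ.real {ω | X 0 ω = 0}))) := by
  have hS := hasSum_measureReal_compoundSum hN hX hiid hident hind
  simp only [hqN] at hS
  have hdist : ∀ z, μ.real {ω | compoundSum N X ω = z}
      = compoundDist q (fun y => μ.real {ω | X 0 ω = y}) z := fun z => (hS z).tsum_eq.symm
  simp only [hdist]
  exact hq.compoundDist_eq_sum_Icc (fun z => (hS z).summable) h0 hx

theorem measure_compoundSum_eq_eq_zero (h : ∀ n, μ {ω | N ω = n + 1} = 0) {z : ℕ} (hz : z ≠ 0) :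
    μ {ω | compoundSum N X ω = z} = 0 := by
  refine measure_mono_null (fun ω (hω : compoundSum N X ω = z) => ?_) (measure_iUnion_null h)
  have hN0 : N ω ≠ 0 := by
    rintro h0
    apply hz
    rw [← hω, compoundSum, h0]
    rfl
  obtain ⟨n, hn⟩ := Nat.exists_eq_succ_of_ne_zero hN0
  exact Set.mem_iUnion.mpr ⟨n, hn⟩

theorem abs_panjer_summand_le [IsProbabilityMeasure μ] (hN : Measurable N) (hX : Measurable (X 0))
    {a b : ℝ} {q : ℕ → ℝ} (hqN : ∀ n, μ.real {ω | N ω = n} = q n) (hq : IsPanjer a b q)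
    {x y : ℕ} (hy : y ∈ Icc 1 x) :
    |(a + b * y / x) * (μ.real {ω | compoundSum N X ω = x - y}
        * (μ.real {ω | X 0 ω = y} / (1 - a * μ.real {ω | X 0 ω = 0})))| ≤ |a + b * y / x| := by
  obtain ⟨hy1, hyx⟩ := mem_Icc.mp hy
  rcases le_or_gt a 1 with ha | ha
  · rw [abs_mul, abs_mul]
    refine mul_le_of_le_one_right (abs_nonneg _) (mul_le_one₀ ?_ (abs_nonneg _) ?_)
    · rw [abs_of_nonneg measureReal_nonneg]
      exact measureReal_le_one
    · refine abs_div_one_sub_mul_le_one ha measureReal_nonneg measureReal_nonneg ?_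
      have hdisj : Disjoint {ω | X 0 ω = 0} {ω | X 0 ω = y} :=
        Set.disjoint_left.mpr fun ω h₁ h₂ => by simp_all; omega
      rw [← measureReal_union hdisj (hX (measurableSet_singleton y))]
      exact measureReal_le_one
  · have hqs : HasSum q 1 := funext hqN ▸ hasSum_measureReal_preimage_singleton hN
    have hq0 : ∀ n, 0 ≤ q n := fun n => hqN n ▸ measureReal_nonneg
    rcases hyx.eq_or_lt with rfl | hlt
    · rw [mul_div_cancel_right₀ _ (by positivity), hq.add_eq_zero_of_one_lt hq0 hqs ha]
      simp
    · have hN0 : ∀ n, μ {ω | N ω = n + 1} = 0 := fun n =>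
        (measureReal_eq_zero_iff).mp ((hqN _).trans (hq.eq_zero_of_one_lt hq0 hqs.summable ha n))
      rw [measureReal_def, measure_compoundSum_eq_eq_zero hN0 (by omega)]
      simp

end CompoundSum

/-- Conditions (i)–(iii): `Pθ` is a regular conditional probability of `P` over `P.map Θ`,
consistent with `Θ`. -/
structure IsRegularCondProb {Ω E : Type*} [MeasurableSpace Ω] [MeasurableSpace E]
    (P : Measure Ω) (Θ : Ω → E) (Pθ : E → Measure Ω) : Prop where
  measurable : ∀ s, MeasurableSet s → Measurable fun θ => Pθ θ s
  lintegral_eq : ∀ s, MeasurableSet s → ∫⁻ θ, Pθ θ s ∂(P.map Θ) = P s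
  ae_eq_one : ∀ B, MeasurableSet B → ∀ᵐ θ ∂((P.map Θ).restrict B), Pθ θ (Θ ⁻¹' B) = 1

namespace IsRegularCondProb

variable {Ω E : Type*} [MeasurableSpace Ω] [MeasurableSpace E] {P : Measure Ω} {Θ : Ω → E}
  {Pθ : E → Measure Ω}

theorem measurable_measureReal (h : IsRegularCondProb P Θ Pθ) {s : Set Ω} (hs : MeasurableSet s) :
    Measurable fun θ => (Pθ θ).real s :=
  (h.measurable s hs).ennreal_toReal

theorem integral_measureReal (h : IsRegularCondProb P Θ Pθ) [∀ θ, IsFiniteMeasure (Pθ θ)]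
    {s : Set Ω} (hs : MeasurableSet s) : ∫ θ, (Pθ θ).real s ∂(P.map Θ) = P.real s := by
  rw [measureReal_def, ← h.lintegral_eq s hs, ← integral_toReal (h.measurable s hs).aemeasurable
    (ae_of_all _ fun θ => measure_lt_top _ _)]
  rfl

theorem measureReal_eq_tsum_mul_integral_pow (h : IsRegularCondProb P Θ Pθ) [IsFiniteMeasure P]
    [∀ θ, IsProbabilityMeasure (Pθ θ)] {A C : Set Ω} (hA : MeasurableSet A) (hC : MeasurableSet C)
    {q : ℕ → ℝ} (hq : Summable q)
    (hrec : ∀ᵐ θ ∂(P.map Θ), (Pθ θ).real A = ∑' n, q n * (Pθ θ).real C ^ n) :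
    P.real A = ∑' n, q n * ∫ θ, (Pθ θ).real C ^ n ∂(P.map Θ) := by
  rw [← h.integral_measureReal hA, integral_congr_ae hrec]
  refine integral_tsum_mul_pow hq (h.measurable_measureReal hC) (ae_of_all _ fun θ => ?_)
  rw [abs_of_nonneg measureReal_nonneg]
  exact measureReal_le_one

theorem map_restrict_eq_withDensity (h : IsRegularCondProb P Θ Pθ)
    [∀ θ, IsProbabilityMeasure (Pθ θ)] (hΘ : Measurable Θ) {s : Set Ω} (hs : MeasurableSet s) :
    (P.restrict s).map Θ = (P.map Θ).withDensity fun θ => Pθ θ s := by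
  refine Measure.ext fun B hB => ?_
  rw [Measure.map_apply hΘ hB, Measure.restrict_apply (hΘ hB), withDensity_apply _ hB,
    ← h.lintegral_eq _ ((hΘ hB).inter hs), ← lintegral_indicator hB]
  have hin := (ae_restrict_iff' hB).mp (h.ae_eq_one B hB)
  have hout := (ae_restrict_iff' hB.compl).mp (h.ae_eq_one Bᶜ hB.compl)
  refine lintegral_congr_ae ?_
  filter_upwards [hin, hout] with θ hθin hθout
  by_cases hθB : θ ∈ B
  · rw [Set.indicator_of_mem hθB, Set.inter_comm]
    refine measure_inter_conull ?_
    rw [measure_compl (hΘ hB) (measure_ne_top _ _), hθin hθB, measure_univ, tsub_self]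
  · rw [Set.indicator_of_notMem hθB]
    refine measure_mono_null Set.inter_subset_left ?_
    exact (prob_compl_eq_one_iff (hΘ hB)).mp (hθout hθB)

theorem integral_indicator_mul_comp (h : IsRegularCondProb P Θ Pθ)
    [∀ θ, IsProbabilityMeasure (Pθ θ)] (hΘ : Measurable Θ) {s : Set Ω} (hs : MeasurableSet s)
    {g : E → ℝ} (hg : Measurable g) :
    ∫ ω, s.indicator (fun _ => (1 : ℝ)) ω * g (Θ ω) ∂P = ∫ θ, (Pθ θ).real s * g θ ∂(P.map Θ) := by
  have hind : (fun ω => s.indicator (fun _ => (1 : ℝ)) ω * g (Θ ω))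
      = s.indicator fun ω => g (Θ ω) := by
    funext ω
    by_cases hω : ω ∈ s <;> simp [hω]
  rw [hind, integral_indicator hs, ← integral_map hΘ.aemeasurable hg.aestronglyMeasurable,
    h.map_restrict_eq_withDensity hΘ hs, integral_withDensity_eq_integral_toReal_smul
      (h.measurable s hs) (ae_of_all _ fun θ => measure_lt_top _ _)]
  rfl

theorem measureReal_eq_sum_integral_of_ae_eq (h : IsRegularCondProb P Θ Pθ)
    [∀ θ, IsProbabilityMeasure (Pθ θ)] (hΘ : Measurable Θ) {ι : Type*} {t : Finset ι}
    {A : Set Ω} (hA : MeasurableSet A) {B : ι → Set Ω} (hB : ∀ i, MeasurableSet (B i))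
    {c : ι → ℝ} {g : ι → E → ℝ} (hg : ∀ i, Measurable (g i))
    (hint : ∀ i ∈ t, Integrable (fun θ => c i * ((Pθ θ).real (B i) * g i θ)) (P.map Θ))
    (hrec : ∀ᵐ θ ∂(P.map Θ), (Pθ θ).real A = ∑ i ∈ t, c i * ((Pθ θ).real (B i) * g i θ)) :
    P.real A = ∑ i ∈ t, c i * ∫ ω, (B i).indicator (fun _ => (1 : ℝ)) ω * g i (Θ ω) ∂P := by
  rw [← h.integral_measureReal hA, integral_congr_ae hrec, integral_finsetSum t hint]
  simp_rw [integral_const_mul, h.integral_indicator_mul_comp hΘ (hB _) (hg _)]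

end IsRegularCondProb

theorem compound_panjer_exchangeable_recursion_general
    {Ω : Type*} [MeasurableSpace Ω] (P : Measure Ω) [IsProbabilityMeasure P]
    (d : ℕ)
    (Θ : Ω → (Fin d → ℝ)) (hΘ : Measurable Θ)
    (Pθ : (Fin d → ℝ) → Measure Ω) (hPθprob : ∀ θ, IsProbabilityMeasure (Pθ θ))
    (hmeas : ∀ E : Set Ω, MeasurableSet E → Measurable fun θ => Pθ θ E)
    (hint : ∀ E : Set Ω, MeasurableSet E → ∫⁻ θ, Pθ θ E ∂(P.map Θ) = P E)
    (hcons : ∀ B : Set (Fin d → ℝ), MeasurableSet B →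
      ∀ᵐ θ ∂((P.map Θ).restrict B), Pθ θ (Θ ⁻¹' B) = 1)
    (N : Ω → ℕ) (hN : Measurable N)
    (X : ℕ → Ω → ℕ) (hX : ∀ j, Measurable (X j))
    (a b : ℝ)
    (hPanjer : ∀ n : ℕ, 1 ≤ n →
      (P {ω | N ω = n}).toReal = (a + b / (n : ℝ)) * (P {ω | N ω = n - 1}).toReal)
    (hae : ∀ᵐ θ ∂(P.map Θ),
      -- (1) the conditional claim number distribution coincides with the unconditional one
      (∀ n : ℕ, Pθ θ {ω | N ω = n} = P {ω | N ω = n})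
      -- (2) conditionally i.i.d. claim sizes
      ∧ (iIndepFun X (Pθ θ)
          ∧ ∀ j : ℕ, (Pθ θ).map (X j) = (Pθ θ).map (X 0))
      -- (3) conditional independence of claim number and claim sizes
      ∧ Indep (MeasurableSpace.comap N inferInstance)
          (MeasurableSpace.comap (fun ω (k : ℕ) => X k ω) inferInstance) (Pθ θ)
      -- (4) nondegeneracy
      ∧ a * (Pθ θ {ω | X 0 ω = 0}).toReal < 1) :
    ((P {ω | (∑ j ∈ Finset.range (N ω), X j ω) = 0}).toReal
        = ∑' n : ℕ, (P {ω | N ω = n}).toReal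
            * ∫ θ, ((Pθ θ {ω | X 0 ω = 0}).toReal) ^ n ∂(P.map Θ))
    ∧ ∀ x : ℕ, 1 ≤ x →
        (P {ω | (∑ j ∈ Finset.range (N ω), X j ω) = x}).toReal
          = ∑ y ∈ Finset.Icc 1 x, (a + b * (y : ℝ) / (x : ℝ))
              * ∫ ω, Set.indicator {ω' | (∑ j ∈ Finset.range (N ω'), X j ω') = x - y}
                  (fun _ => (1 : ℝ)) ω
                * (Pθ (Θ ω) {ω' | X 0 ω' = y}).toReal
                / (1 - a * (Pθ (Θ ω) {ω' | X 0 ω' = 0}).toReal) ∂P := by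
  have hP : IsRegularCondProb P Θ Pθ := ⟨hmeas, hint, hcons⟩
  have hS z : MeasurableSet {ω | compoundSum N X ω = z} :=
    measurable_compoundSum hN hX (measurableSet_singleton z)
  have hX0 y : MeasurableSet {ω | X 0 ω = y} := hX 0 (measurableSet_singleton y)
  have hPan : IsPanjer a b fun n => P.real {ω | N ω = n} := fun n => by
    have h := hPanjer (n + 1) n.succ_pos
    rwa [Nat.cast_add_one, add_tsub_cancel_right] at h
  have hq : ∀ᵐ θ ∂(P.map Θ), ∀ n, (Pθ θ).real {ω | N ω = n} = P.real {ω | N ω = n} :=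
    hae.mono fun θ hθ n => by rw [measureReal_def, hθ.1 n]; rfl
  refine ⟨?_, fun x hx => ?_⟩
  · refine hP.measureReal_eq_tsum_mul_integral_pow (hS 0) (hX0 0)
      (q := fun n => P.real {ω | N ω = n}) (hasSum_measureReal_preimage_singleton hN).summable ?_
    filter_upwards [hae, hq] with θ hθ hqθ
    obtain ⟨-, ⟨hiid, hident⟩, hind, -⟩ := hθ
    simp_rw [measureReal_compoundSum_eq_zero_eq_tsum hN hX hiid hident hind, hqθ]
  · have hK y : Measurable fun θ =>
        (Pθ θ).real {ω | X 0 ω = y} / (1 - a * (Pθ θ).real {ω | X 0 ω = 0}) :=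
      (hP.measurable_measureReal (hX0 y)).div
        (measurable_const.sub ((hP.measurable_measureReal (hX0 0)).const_mul a))
    refine (hP.measureReal_eq_sum_integral_of_ae_eq hΘ (hS x) (fun y => hS (x - y)) hK
      (c := fun y : ℕ => a + b * y / x) (fun y hy => Integrable.of_bound ?_ |a + b * y / x| ?_)
      ?_).trans (sum_congr rfl fun y _ => by simp only [mul_div_assoc]; rfl)
    · exact (measurable_const.mul
        ((hP.measurable_measureReal (hS _)).mul (hK y))).aestronglyMeasurable
    · exact hq.mono fun θ hqθ => abs_panjer_summand_le hN (hX 0) hqθ hPan hy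
    · filter_upwards [hae, hq] with θ hθ hqθ
      obtain ⟨-, ⟨hiid, hident⟩, hind, h0⟩ := hθ
      exact measureReal_compoundSum_eq_sum_Icc hN hX hiid hident hind hqθ hPan h0 (by omega)

/-- Panjer recursion for a compound Panjer(a, b; 0) distribution with
exchangeable (conditionally i.i.d.) ℕ-valued claim sizes, the claim number being
independent of the structural parameter `Θ`. -/
theorem compound_panjer_exchangeable_recursion
    {Ω : Type*} [MeasurableSpace Ω] (P : Measure Ω) [IsProbabilityMeasure P]
    (d : ℕ) (hd : 1 ≤ d) (D : Set (Fin d → ℝ)) (hD : MeasurableSet D)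
    (Θ : Ω → (Fin d → ℝ)) (hΘ : Measurable Θ) (hΘD : ∀ ω, Θ ω ∈ D)
    (Pθ : (Fin d → ℝ) → Measure Ω) (hPθprob : ∀ θ, IsProbabilityMeasure (Pθ θ))
    (hmeas : ∀ E : Set Ω, MeasurableSet E → Measurable fun θ => Pθ θ E)
    (hint : ∀ E : Set Ω, MeasurableSet E → ∫⁻ θ, Pθ θ E ∂(P.map Θ) = P E)
    (hcons : ∀ B : Set (Fin d → ℝ), MeasurableSet B →
      ∀ᵐ θ ∂((P.map Θ).restrict B), Pθ θ (Θ ⁻¹' B) = 1)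
    (N : Ω → ℕ) (hN : Measurable N)
    (X : ℕ → Ω → ℕ) (hX : ∀ j, Measurable (X j))
    (a b : ℝ)
    (hPanjer : ∀ n : ℕ, 1 ≤ n →
      (P {ω | N ω = n}).toReal = (a + b / (n : ℝ)) * (P {ω | N ω = n - 1}).toReal)
    (hae : ∀ᵐ θ ∂(P.map Θ),
      -- (1) the conditional claim number distribution coincides with the unconditional one
      (∀ n : ℕ, Pθ θ {ω | N ω = n} = P {ω | N ω = n})
      -- (2) conditionally i.i.d. claim sizes
      ∧ (iIndepFun X (Pθ θ)
          ∧ ∀ j : ℕ, (Pθ θ).map (X j) = (Pθ θ).map (X 0))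
      -- (3) conditional independence of claim number and claim sizes
      ∧ Indep (MeasurableSpace.comap N inferInstance)
          (MeasurableSpace.comap (fun ω (k : ℕ) => X k ω) inferInstance) (Pθ θ)
      -- (4) nondegeneracy
      ∧ a * (Pθ θ {ω | X 0 ω = 0}).toReal < 1) :
    ((P {ω | (∑ j ∈ Finset.range (N ω), X j ω) = 0}).toReal
        = ∑' n : ℕ, (P {ω | N ω = n}).toReal
            * ∫ θ, ((Pθ θ {ω | X 0 ω = 0}).toReal) ^ n ∂(P.map Θ))
    ∧ ∀ x : ℕ, 1 ≤ x →
        (P {ω | (∑ j ∈ Finset.range (N ω), X j ω) = x}).toReal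
          = ∑ y ∈ Finset.Icc 1 x, (a + b * (y : ℝ) / (x : ℝ))
              * ∫ ω, Set.indicator {ω' | (∑ j ∈ Finset.range (N ω'), X j ω') = x - y}
                  (fun _ => (1 : ℝ)) ω
                * (Pθ (Θ ω) {ω' | X 0 ω' = y}).toReal
                / (1 - a * (Pθ (Θ ω) {ω' | X 0 ω' = 0}).toReal) ∂P :=
  compound_panjer_exchangeable_recursion_general P d Θ hΘ Pθ hPθprob hmeas hint hcons N hN X hX a b
    hPanjer hae
end

section
/- Suppose d = 1 and D ⊆ (0, ∞). Assume N, X_1 and N·X_1 are P-integrable, that N and X_1 are P_θ-integrable for P_Θ-almost all θ, and that there exist functions h_1, h_2 : D → ℝ, both monotone nondecreasing or both monotone nonincreasing, with h_1(θ) = ∫_Ω N dP_θ and h_2(θ) = ∫_Ω X_1 dP_θ for P_Θ-almost all θ ∈ D. If moreover σ(N) and σ(X_1) are independent under P_θ for P_Θ-almost all θ, then E_P[N·X_1] ≥ E_P[N] · E_P[X_1]; that is, N and X_1 are nonnegatively correlated under P. If instead one of h_1, h_2 is nondecreasing and the other nonincreasing, then E_P[N·X_1] ≤ E_P[N] ·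 E_P[X_1]. -/
/-!
Disintegrating `P` along `Θ` gives `E[N] = E[h₁ ∘ Θ]`, `E[X₁] = E[h₂ ∘ Θ]` and, by conditional
independence, `E[N X₁] = E[(h₁ ∘ Θ) (h₂ ∘ Θ)]`. Since `Θ` takes values in `D`, the functions
`h₁ ∘ Θ` and `h₂ ∘ Θ` are similarly (resp. oppositely) ordered, and Chebyshev's integral inequality
applies: `2 (E[fg] - E[f] E[g]) = ∫∫ (f x - f y) (g x - g y) dP(x) dP(y)`, whose integrand has
constant sign.
-/

open MeasureTheory ProbabilityTheory

namespace MeasureTheory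

section Chebyshev

variable {α : Type*} [MeasurableSpace α] {μ : Measure α} [IsProbabilityMeasure μ] {f g : α → ℝ}

theorem integral_prod_sub_mul_sub (hf : Integrable f μ) (hg : Integrable g μ)
    (hfg : Integrable (fun x ↦ f x * g x) μ) :
    ∫ z, (f z.1 - f z.2) * (g z.1 - g z.2) ∂μ.prod μ =
      2 * (∫ x, f x * g x ∂μ - (∫ x, f x ∂μ) * ∫ x, g x ∂μ) := by
  have hfg₁ : Integrable (fun z : α × α ↦ f z.1 * g z.1) (μ.prod μ) := hfg.comp_fst μ
  have hfg₂ : Integrable (fun z : α × α ↦ f z.2 * g z.2) (μ.prod μ) := hfg.comp_snd μ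
  have hf₁g₂ : Integrable (fun z : α × α ↦ f z.1 * g z.2) (μ.prod μ) := hf.mul_prod hg
  have hf₂g₁ : Integrable (fun z : α × α ↦ f z.2 * g z.1) (μ.prod μ) := by
    simpa only [mul_comm] using hg.mul_prod hf
  calc ∫ z, (f z.1 - f z.2) * (g z.1 - g z.2) ∂μ.prod μ
      = ∫ z, ((f z.1 * g z.1 + f z.2 * g z.2) - (f z.1 * g z.2 + f z.2 * g z.1)) ∂μ.prod μ := by
        congr 1 with z; ring
    _ = (∫ z, f z.1 * g z.1 ∂μ.prod μ + ∫ z, f z.2 * g z.2 ∂μ.prod μ) -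
          (∫ z, f z.1 * g z.2 ∂μ.prod μ + ∫ z, f z.2 * g z.1 ∂μ.prod μ) := by
        rw [integral_sub (hfg₁.fun_add hfg₂) (hf₁g₂.fun_add hf₂g₁), integral_add hfg₁ hfg₂,
          integral_add hf₁g₂ hf₂g₁]
    _ = 2 * (∫ x, f x * g x ∂μ - (∫ x, f x ∂μ) * ∫ x, g x ∂μ) := by
        have hgf : ∫ z, f z.2 * g z.1 ∂μ.prod μ = (∫ x, g x ∂μ) * ∫ x, f x ∂μ := by
          simp_rw [mul_comm (f _)]; exact integral_prod_mul g f
        rw [integral_fun_fst (fun x ↦ f x * g x), integral_fun_snd (fun x ↦ f x * g x),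
          integral_prod_mul f g, hgf]
        simp only [probReal_univ, one_smul]
        ring

theorem Monovary.integral_mul_integral_le_integral_mul (hm : Monovary f g)
    (hf : Integrable f μ) (hg : Integrable g μ) (hfg : Integrable (fun x ↦ f x * g x) μ) :
    (∫ x, f x ∂μ) * ∫ x, g x ∂μ ≤ ∫ x, f x * g x ∂μ := by
  have := integral_prod_sub_mul_sub hf hg hfg ▸
    integral_nonneg fun z : α × α ↦ hm.sub_mul_sub_nonneg z.2 z.1
  linarith

theorem Antivary.integral_mul_le_integral_mul_integral (ha : Antivary f g)
    (hf : Integrable f μ) (hg : Integrable g μ) (hfg : Integrable (fun x ↦ f x * g x) μ) :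
    ∫ x, f x * g x ∂μ ≤ (∫ x, f x ∂μ) * ∫ x, g x ∂μ := by
  have := integral_prod_sub_mul_sub hf hg hfg ▸
    integral_nonpos fun z : α × α ↦ ha.sub_mul_sub_nonpos z.2 z.1
  linarith

end Chebyshev

section Bind

variable {α β : Type*} [MeasurableSpace α] [MeasurableSpace β] {μ : Measure α}
  {κ : α → Measure β} {f : β → ℝ} {P : Measure β} {Θ : β → α} {h : α → ℝ}

theorem Integrable.integral_bind (hκ : Measurable κ) (hf : Integrable f (μ.bind κ)) :
    Integrable (fun x ↦ ∫ y, f y ∂κ x) μ := by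
  rw [show μ.bind κ = _ from Measure.comp_eq_comp_const_apply (κ := ⟨κ, hκ⟩)] at hf
  simpa using hf.integral_comp

theorem integral_bind (hκ : Measurable κ) (hf : Integrable f (μ.bind κ)) :
    ∫ y, f y ∂μ.bind κ = ∫ x, ∫ y, f y ∂κ x ∂μ := by
  rw [show μ.bind κ = _ from Measure.comp_eq_comp_const_apply (κ := ⟨κ, hκ⟩)] at hf ⊢
  simpa using Kernel.integral_comp hf

theorem integrable_of_ae_eq_integral_bind (hκ : Measurable κ) (hf : Integrable f (μ.bind κ))
    (hh : ∀ᵐ a ∂μ, h a = ∫ y, f y ∂κ a) : Integrable h μ :=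
  (hf.integral_bind hκ).congr (hh.mono fun _ ↦ Eq.symm)

theorem integrable_comp_of_bind_map_eq (hΘ : AEMeasurable Θ P) (hκ : Measurable κ)
    (hP : (P.map Θ).bind κ = P) (hf : Integrable f P) (hh : ∀ᵐ a ∂P.map Θ, h a = ∫ y, f y ∂κ a) :
    Integrable (fun x ↦ h (Θ x)) P := by
  rw [← hP] at hf
  exact (integrable_of_ae_eq_integral_bind hκ hf hh).comp_aemeasurable hΘ

theorem integral_comp_eq_of_bind_map_eq (hΘ : AEMeasurable Θ P) (hκ : Measurable κ)
    (hP : (P.map Θ).bind κ = P) (hf : Integrable f P) (hh : ∀ᵐ a ∂P.map Θ, h a = ∫ y, f y ∂κ a) :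
    ∫ x, h (Θ x) ∂P = ∫ x, f x ∂P := by
  rw [← hP] at hf
  rw [← integral_map hΘ (integrable_of_ae_eq_integral_bind hκ hf hh).1, integral_congr_ae hh,
    ← integral_bind hκ hf, hP]

end Bind

end MeasureTheory

section Vary

variable {ι ι' α β : Type*} [Preorder α] [Preorder β] {f : ι → α} {g : ι → β} {s : Set ι}

theorem MonovaryOn.monovary_comp (h : MonovaryOn f g s) {k : ι' → ι} (hk : ∀ x, k x ∈ s) :
    Monovary (f ∘ k) (g ∘ k) :=
  fun _ _ hij ↦ h (hk _) (hk _) hij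

theorem AntivaryOn.antivary_comp (h : AntivaryOn f g s) {k : ι' → ι} (hk : ∀ x, k x ∈ s) :
    Antivary (f ∘ k) (g ∘ k) :=
  fun _ _ hij ↦ h (hk _) (hk _) hij

end Vary

theorem claim_number_claim_size_correlation_general
    {Ω : Type*} [MeasurableSpace Ω] (P : Measure Ω) [IsProbabilityMeasure P]
    (D : Set ℝ)
    (Θ : Ω → ℝ) (hΘ : Measurable Θ) (hΘD : ∀ ω, Θ ω ∈ D)
    (Pθ : ℝ → Measure Ω)
    (hmeas : ∀ E : Set Ω, MeasurableSet E → Measurable fun θ => Pθ θ E)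
    (hint : ∀ E : Set Ω, MeasurableSet E → ∫⁻ θ, Pθ θ E ∂(P.map Θ) = P E)
    (N : Ω → ℕ)
    (X₁ : Ω → ℝ)
    (hNint : Integrable (fun ω => (N ω : ℝ)) P)
    (hXint : Integrable X₁ P)
    (hNXint : Integrable (fun ω => (N ω : ℝ) * X₁ ω) P)
    (hNθint : ∀ᵐ θ ∂(P.map Θ), Integrable (fun ω => (N ω : ℝ)) (Pθ θ))
    (hXθint : ∀ᵐ θ ∂(P.map Θ), Integrable X₁ (Pθ θ))
    (h₁ h₂ : ℝ → ℝ)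
    (hh₁ : ∀ᵐ θ ∂(P.map Θ), h₁ θ = ∫ ω, (N ω : ℝ) ∂(Pθ θ))
    (hh₂ : ∀ᵐ θ ∂(P.map Θ), h₂ θ = ∫ ω, X₁ ω ∂(Pθ θ))
    (hindep : ∀ᵐ θ ∂(P.map Θ),
      Indep (MeasurableSpace.comap N inferInstance)
        (MeasurableSpace.comap X₁ inferInstance) (Pθ θ)) :
    (((MonotoneOn h₁ D ∧ MonotoneOn h₂ D) ∨ (AntitoneOn h₁ D ∧ AntitoneOn h₂ D)) →
      (∫ ω, (N ω : ℝ) ∂P) * (∫ ω, X₁ ω ∂P) ≤ ∫ ω, (N ω : ℝ) * X₁ ω ∂P)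
    ∧ (((MonotoneOn h₁ D ∧ AntitoneOn h₂ D) ∨ (AntitoneOn h₁ D ∧ MonotoneOn h₂ D)) →
      ∫ ω, (N ω : ℝ) * X₁ ω ∂P ≤ (∫ ω, (N ω : ℝ) ∂P) * (∫ ω, X₁ ω ∂P)) := by
  have hκ : Measurable Pθ := Measure.measurable_of_measurable_coe _ hmeas
  have hP : (P.map Θ).bind Pθ = P :=
    Measure.ext fun E hE ↦ (Measure.bind_apply hE hκ.aemeasurable).trans (hint E hE)
  have hh₁₂ : ∀ᵐ θ ∂P.map Θ, h₁ θ * h₂ θ = ∫ ω, (N ω : ℝ) * X₁ ω ∂Pθ θ := by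
    filter_upwards [hindep, hNθint, hXθint, hh₁, hh₂] with θ hNX hNθ hXθ e₁ e₂
    have hNX' : IndepFun (fun ω ↦ (N ω : ℝ)) X₁ (Pθ θ) :=
      IndepFun.comp (φ := Nat.cast) (ψ := id) hNX measurable_from_top measurable_id
    rw [e₁, e₂, hNX'.integral_fun_mul_eq_mul_integral hNθ.1 hXθ.1]
  have hΘ' : AEMeasurable Θ P := hΘ.aemeasurable
  rw [← integral_comp_eq_of_bind_map_eq hΘ' hκ hP hNint hh₁,
    ← integral_comp_eq_of_bind_map_eq hΘ' hκ hP hXint hh₂,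
    ← integral_comp_eq_of_bind_map_eq hΘ' hκ hP hNXint hh₁₂]
  have i₁ := integrable_comp_of_bind_map_eq hΘ' hκ hP hNint hh₁
  have i₂ := integrable_comp_of_bind_map_eq hΘ' hκ hP hXint hh₂
  have i₁₂ := integrable_comp_of_bind_map_eq hΘ' hκ hP hNXint hh₁₂
  constructor
  · rintro (⟨hm₁, hm₂⟩ | ⟨hm₁, hm₂⟩) <;>
      exact ((hm₁.monovaryOn hm₂).monovary_comp hΘD).integral_mul_integral_le_integral_mul
        i₁ i₂ i₁₂
  · rintro (⟨hm₁, hm₂⟩ | ⟨hm₁, hm₂⟩) <;>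
      exact ((hm₁.antivaryOn hm₂).antivary_comp hΘD).integral_mul_le_integral_mul_integral
        i₁ i₂ i₁₂

/-- If the conditional means `θ ↦ E_{P_θ}[N]` and `θ ↦ E_{P_θ}[X₁]` have
the same monotonicity on `D ⊆ (0, ∞)` (and `N`, `X₁` are conditionally independent), then
`N` and `X₁` are nonnegatively correlated under `P`; with opposite monotonicity they are
nonpositively correlated. -/
theorem claim_number_claim_size_correlation
    {Ω : Type*} [MeasurableSpace Ω] (P : Measure Ω) [IsProbabilityMeasure P]
    (D : Set ℝ) (hD : MeasurableSet D) (hDpos : D ⊆ Set.Ioi (0 : ℝ))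
    (Θ : Ω → ℝ) (hΘ : Measurable Θ) (hΘD : ∀ ω, Θ ω ∈ D)
    (Pθ : ℝ → Measure Ω) (hPθprob : ∀ θ, IsProbabilityMeasure (Pθ θ))
    (hmeas : ∀ E : Set Ω, MeasurableSet E → Measurable fun θ => Pθ θ E)
    (hint : ∀ E : Set Ω, MeasurableSet E → ∫⁻ θ, Pθ θ E ∂(P.map Θ) = P E)
    (hcons : ∀ B : Set ℝ, MeasurableSet B →
      ∀ᵐ θ ∂((P.map Θ).restrict B), Pθ θ (Θ ⁻¹' B) = 1)
    (N : Ω → ℕ) (hN : Measurable N)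
    (X₁ : Ω → ℝ) (hX₁ : Measurable X₁) (hX₁nn : ∀ ω, 0 ≤ X₁ ω)
    (hNint : Integrable (fun ω => (N ω : ℝ)) P)
    (hXint : Integrable X₁ P)
    (hNXint : Integrable (fun ω => (N ω : ℝ) * X₁ ω) P)
    (hNθint : ∀ᵐ θ ∂(P.map Θ), Integrable (fun ω => (N ω : ℝ)) (Pθ θ))
    (hXθint : ∀ᵐ θ ∂(P.map Θ), Integrable X₁ (Pθ θ))
    (h₁ h₂ : ℝ → ℝ)
    (hh₁ : ∀ᵐ θ ∂(P.map Θ), h₁ θ = ∫ ω, (N ω : ℝ) ∂(Pθ θ))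
    (hh₂ : ∀ᵐ θ ∂(P.map Θ), h₂ θ = ∫ ω, X₁ ω ∂(Pθ θ))
    (hindep : ∀ᵐ θ ∂(P.map Θ),
      Indep (MeasurableSpace.comap N inferInstance)
        (MeasurableSpace.comap X₁ inferInstance) (Pθ θ)) :
    (((MonotoneOn h₁ D ∧ MonotoneOn h₂ D) ∨ (AntitoneOn h₁ D ∧ AntitoneOn h₂ D)) →
      (∫ ω, (N ω : ℝ) ∂P) * (∫ ω, X₁ ω ∂P) ≤ ∫ ω, (N ω : ℝ) * X₁ ω ∂P)
    ∧ (((MonotoneOn h₁ D ∧ AntitoneOn h₂ D) ∨ (AntitoneOn h₁ D ∧ MonotoneOn h₂ D)) →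
      ∫ ω, (N ω : ℝ) * X₁ ω ∂P ≤ (∫ ω, (N ω : ℝ) ∂P) * (∫ ω, X₁ ω ∂P)) :=
  claim_number_claim_size_correlation_general P D Θ hΘ hΘD Pθ hmeas hint N X₁ hNint hXint hNXint
    hNθint hXθint h₁ h₂ hh₁ hh₂ hindep
end

section
/- Let a > 0 and for each n ∈ ℕ define p_n := e^{−a} · Σ_{θ=0}^∞ e^{−θ} · (θ^n / n!) · (a^θ / θ!). Then p_0 = e^{−a·(1 − e^{−1})}, and for every integer n ≥ 1, p_n = (a · e^{−1} / n) · Σ_{k=0}^{n−1} (1/k!) · p_{n−1−k}. -/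
/-!
With `b = a / e`, the series defining `eᵃ pₙ` is `Sₙ(b) = ∑_θ θⁿ/n! · b^θ/θ!`, and `S₀(b) = eᵇ`.
Shifting `θ ↦ θ + 1` and expanding `(θ + 1)ⁿ / n!` binomially gives
`(n + 1) Sₙ₊₁(b) = b ∑_{k ≤ n} Sₙ₋ₖ(b) / k!`, which is the recursion after multiplying by `e⁻ᵃ`.
-/

open Finset Real
open scoped Nat

/-- `eᵇ Tₙ(b) / n!`, where `Tₙ` is the `n`-th Touchard polynomial. -/
noncomputable def touchardSeries (b : ℝ) (n : ℕ) : ℝ :=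
  ∑' θ : ℕ, (θ : ℝ) ^ n / n ! * (b ^ θ / θ !)

lemma summable_touchardSeries (b : ℝ) (n : ℕ) :
    Summable fun θ : ℕ => (θ : ℝ) ^ n / n ! * (b ^ θ / θ !) := by
  refine (Real.summable_pow_div_factorial (exp 1 * |b|)).of_norm_bounded fun θ => ?_
  rw [norm_mul, Real.norm_of_nonneg (by positivity), norm_div, norm_pow, Real.norm_eq_abs,
    Real.norm_natCast]
  calc (θ : ℝ) ^ n / n ! * (|b| ^ θ / θ !) ≤ exp θ * (|b| ^ θ / θ !) := by
        gcongr; exact pow_div_factorial_le_exp _ θ.cast_nonneg n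
    _ = (exp 1 * |b|) ^ θ / θ ! := by rw [mul_pow, ← exp_nat_mul, mul_one]; ring

lemma touchardSeries_zero (b : ℝ) : touchardSeries b 0 = exp b := by
  simpa [touchardSeries, exp_eq_exp_ℝ] using (NormedSpace.expSeries_div_hasSum_exp b).tsum_eq

lemma one_add_pow_div_factorial {K : Type*} [Field K] [CharZero K] (x : K) (n : ℕ) :
    (1 + x) ^ n / n ! = ∑ k ∈ range (n + 1), 1 / k ! * (x ^ (n - k) / (n - k)!) := by
  rw [add_pow, sum_div]
  refine sum_congr rfl fun k hk => ?_
  have hn : (n ! : K) ≠ 0 := Nat.cast_ne_zero.mpr n.factorial_ne_zero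
  rw [one_pow, one_mul, Nat.cast_choose K (mem_range_succ_iff.mp hk)]
  field_simp

lemma touchardSeries_succ (b : ℝ) (n : ℕ) :
    touchardSeries b (n + 1) =
      b / (n + 1) * ∑ k ∈ range (n + 1), 1 / k ! * touchardSeries b (n - k) := by
  have shift (m : ℕ) : ((m + 1 : ℕ) : ℝ) ^ (n + 1) / (n + 1)! * (b ^ (m + 1) / (m + 1)!) =
      b / (n + 1) *
        ∑ k ∈ range (n + 1), 1 / k ! * ((m : ℝ) ^ (n - k) / (n - k)! * (b ^ m / m !)) := by
    simp_rw [← mul_assoc, ← sum_mul, ← one_add_pow_div_factorial, Nat.factorial_succ]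
    push_cast
    field_simp
    ring
  rw [touchardSeries, (summable_touchardSeries b _).tsum_eq_zero_add]
  simp only [shift, tsum_mul_left]
  rw [Summable.tsum_finsetSum fun k _ => (summable_touchardSeries b _).mul_left _]
  simp [touchardSeries, tsum_mul_left]

theorem neyman_type_A_recursion_general (a : ℝ) (p : ℕ → ℝ)
    (hp : ∀ n : ℕ, p n = Real.exp (-a) * ∑' θ : ℕ,
      Real.exp (-(θ : ℝ)) * ((θ : ℝ) ^ n / (n ! : ℝ)) * (a ^ θ / (θ ! : ℝ))) :
    p 0 = Real.exp (-a * (1 - Real.exp (-1)))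
    ∧ ∀ n : ℕ, 1 ≤ n →
        p n = (a * Real.exp (-1) / (n : ℝ))
          * ∑ k ∈ Finset.range n, (1 / (k ! : ℝ)) * p (n - 1 - k) := by
  have hp_touchard (n : ℕ) : p n = exp (-a) * touchardSeries (a * exp (-1)) n := by
    rw [hp, touchardSeries]
    congr 1
    refine tsum_congr fun θ => ?_
    rw [mul_pow, ← exp_nat_mul, mul_neg_one]
    ring
  refine ⟨by rw [hp_touchard, touchardSeries_zero, ← exp_add]; ring_nf, fun n hn => ?_⟩
  obtain ⟨m, rfl⟩ := Nat.exists_eq_add_of_le' hn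
  simp only [hp_touchard, touchardSeries_succ, Nat.add_sub_cancel, mul_sum]
  push_cast
  refine sum_congr rfl fun k _ => ?_
  ring

/-- Recursion for the pmf of the Neyman Type A distribution (mixed Poisson
with Poisson(a) distributed structural parameter). -/
theorem neyman_type_A_recursion (a : ℝ) (ha : 0 < a) (p : ℕ → ℝ)
    (hp : ∀ n : ℕ, p n = Real.exp (-a) * ∑' θ : ℕ,
      Real.exp (-(θ : ℝ)) * ((θ : ℝ) ^ n / (n ! : ℝ)) * (a ^ θ / (θ ! : ℝ))) :
    p 0 = Real.exp (-a * (1 - Real.exp (-1)))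
    ∧ ∀ n : ℕ, 1 ≤ n →
        p n = (a * Real.exp (-1) / (n : ℝ))
          * ∑ k ∈ Finset.range n, (1 / (k ! : ℝ)) * p (n - 1 - k) :=
  neyman_type_A_recursion_general a p hp
end

section
/- Let α, β > 0, let w_1, w_2 ∈ [0, 1] with w_1 + w_2 = 1, and define the density u(θ) := w_1 · β · e^{−β·θ} + w_2 · (β^α / Γ(α)) · θ^{α−1} · e^{−β·θ} for θ > 0 and p_n := ∫_0^∞ e^{−θ} · (θ^n / n!) · u(θ) dθ for n ∈ ℕ. Then p_0 = w_1 · β/(β+1) + w_2 · (β/(β+1))^α, and for every integer n ≥ 1, p_n = [1/(n·(β+1))] · [w_1 · n! · (β+1)^{α−1} + w_2 · (α)_n · β^{α−1}] / [w_1 · (n−1)! · (β+1)^{α−1} + w_2 · (α)_{n−1} · β^{α−1}] · p_{n−1}, where (α)_k := α·(α+1)···(α+k−1) denotes the ascending factorial with (α)_0 := 1. -/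
/-!
Poisson mixing over a `Gamma(a, β)` density yields the negative binomial weights
`(a)_n / n! · (β/(β+1))^a · (β+1)^(-n)`, and `Exp(β) = Gamma(1, β)`. Hence
`p_n = β (β+1)^(-α) / ((β+1)^n n!) · N_n`, with `N_n` the numerator of the claimed ratio,
and the recursion is the quotient of two consecutive instances of this closed form.
-/

open MeasureTheory
open scoped Nat

/-- The ascending factorial `(α)_k = α (α+1) ⋯ (α+k−1)` of a real number, with `(α)_0 = 1`. -/
noncomputable def ascFac (α : ℝ) : ℕ → ℝ
  | 0 => 1
  | k + 1 => ascFac α k * (α + k)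

open Real Set ProbabilityTheory

lemma ascFac_pos {α : ℝ} (hα : 0 < α) (n : ℕ) : 0 < ascFac α n := by
  induction n with
  | zero => simp [ascFac]
  | succ k ih => exact mul_pos ih (by positivity)

lemma ascFac_one (n : ℕ) : ascFac 1 n = n ! := by
  induction n with
  | zero => simp [ascFac]
  | succ k ih => rw [ascFac, ih, Nat.factorial_succ]; push_cast; ring

lemma Real.Gamma_add_nat_eq_ascFac_mul {α : ℝ} (hα : 0 < α) (n : ℕ) :
    Gamma (α + n) = ascFac α n * Gamma α := by
  induction n with
  | zero => simp [ascFac]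
  | succ k ih =>
    rw [Nat.cast_succ, ← add_assoc, Gamma_add_one (by positivity), ih, ascFac]
    ring

lemma poisson_mul_gammaPDFReal_of_pos {a r θ : ℝ} (hθ : 0 < θ) (n : ℕ) :
    exp (-θ) * (θ ^ n / n !) * gammaPDFReal a r θ
      = r ^ a / (Gamma a * n !) * (θ ^ ((n + a) - 1) * exp (-((r + 1) * θ))) := by
  have hpow : θ ^ ((n + a) - 1) = θ ^ n * θ ^ (a - 1) := by
    rw [add_sub_assoc, rpow_add hθ, rpow_natCast]
  have hexp : exp (-((r + 1) * θ)) = exp (-θ) * exp (-(r * θ)) := by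
    rw [← exp_add]; ring_nf
  rw [gammaPDFReal, if_pos hθ.le, hpow, hexp]
  ring

lemma integrableOn_poisson_mul_gammaPDFReal {a r : ℝ} (ha : 0 < a) (hr : 0 < r) (n : ℕ) :
    IntegrableOn (fun θ ↦ exp (-θ) * (θ ^ n / n !) * gammaPDFReal a r θ) (Ioi 0) := by
  have hint : IntegrableOn (fun θ : ℝ ↦ θ ^ ((n + a) - 1) * exp (-((r + 1) * θ))) (Ioi 0) := by
    simpa only [rpow_one, neg_mul] using
      integrableOn_rpow_mul_exp_neg_mul_rpow (p := 1) (by linarith [(n.cast_nonneg : (0 : ℝ) ≤ n)])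
        one_pos (by linarith : 0 < r + 1)
  exact IntegrableOn.congr_fun (hint.const_mul _)
    (fun θ hθ ↦ (poisson_mul_gammaPDFReal_of_pos hθ n).symm) measurableSet_Ioi

theorem integral_poisson_mul_gammaPDFReal {a r : ℝ} (ha : 0 < a) (hr : 0 < r) (n : ℕ) :
    ∫ θ in Ioi 0, exp (-θ) * (θ ^ n / n !) * gammaPDFReal a r θ
      = ascFac a n / n ! * (r / (r + 1)) ^ a / (r + 1) ^ n := by
  have hr1 : 0 < r + 1 := by linarith
  rw [setIntegral_congr_fun measurableSet_Ioi (fun θ hθ ↦ poisson_mul_gammaPDFReal_of_pos hθ n),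
    integral_const_mul, integral_rpow_mul_exp_neg_mul_Ioi (by positivity) hr1, add_comm (n : ℝ),
    Gamma_add_nat_eq_ascFac_mul ha, div_rpow hr.le hr1.le, one_div, inv_rpow hr1.le, rpow_add hr1,
    rpow_natCast]
  have := Gamma_pos_of_pos ha
  field_simp

theorem integral_poisson_mul_gammaPDFReal_mixture {a₁ a₂ r : ℝ} (ha₁ : 0 < a₁) (ha₂ : 0 < a₂)
    (hr : 0 < r) (w₁ w₂ : ℝ) (n : ℕ) :
    ∫ θ in Ioi 0, exp (-θ) * (θ ^ n / n !) * (w₁ * gammaPDFReal a₁ r θ + w₂ * gammaPDFReal a₂ r θ)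
      = w₁ * (ascFac a₁ n / n ! * (r / (r + 1)) ^ a₁ / (r + 1) ^ n)
        + w₂ * (ascFac a₂ n / n ! * (r / (r + 1)) ^ a₂ / (r + 1) ^ n) := by
  simp only [mul_add, mul_left_comm _ w₁, mul_left_comm _ w₂]
  rw [integral_add ((integrableOn_poisson_mul_gammaPDFReal ha₁ hr n).const_mul _)
    ((integrableOn_poisson_mul_gammaPDFReal ha₂ hr n).const_mul _), integral_const_mul,
    integral_const_mul, integral_poisson_mul_gammaPDFReal ha₁ hr,
    integral_poisson_mul_gammaPDFReal ha₂ hr]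

lemma apply_succ_eq_of_eq_div_pow_mul_factorial {p N : ℕ → ℝ} {c r : ℝ} (hr : r ≠ 0)
    (hp : ∀ n, p n = c / (r ^ n * n !) * N n) {n : ℕ} (hN : N n ≠ 0) :
    p (n + 1) = 1 / ((n + 1 : ℕ) * r) * (N (n + 1) / N n) * p n := by
  rw [hp, hp, Nat.factorial_succ, pow_succ]
  push_cast
  field_simp

lemma mul_add_mul_pos_of_add_eq_one {w₁ w₂ a b : ℝ} (hw₁ : 0 ≤ w₁) (hw₂ : 0 ≤ w₂)
    (hw : w₁ + w₂ = 1) (ha : 0 < a) (hb : 0 < b) : 0 < w₁ * a + w₂ * b := by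
  nlinarith [mul_nonneg hw₁ ha.le, mul_nonneg hw₂ hb.le, mul_pos ha hb]

/-- Recursion for the pmf of a mixed Poisson distribution whose mixing
distribution is `w₁ · Exp(β) + w₂ · Gamma(α, β)`. -/
theorem mixed_poisson_exp_gamma_mixture_recursion
    (α β w₁ w₂ : ℝ) (hα : 0 < α) (hβ : 0 < β)
    (hw₁ : 0 ≤ w₁) (hw₂ : 0 ≤ w₂) (hw : w₁ + w₂ = 1)
    (u : ℝ → ℝ)
    (hu : ∀ θ : ℝ, 0 < θ →
      u θ = w₁ * β * Real.exp (-β * θ)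
        + w₂ * (β ^ α / Real.Gamma α) * θ ^ (α - 1) * Real.exp (-β * θ))
    (p : ℕ → ℝ)
    (hp : ∀ n : ℕ, p n = ∫ θ in Set.Ioi (0 : ℝ),
      Real.exp (-θ) * (θ ^ n / (n ! : ℝ)) * u θ) :
    p 0 = w₁ * (β / (β + 1)) + w₂ * (β / (β + 1)) ^ α
    ∧ ∀ n : ℕ, 1 ≤ n →
        p n = (1 / ((n : ℝ) * (β + 1)))
          * ((w₁ * (n ! : ℝ) * (β + 1) ^ (α - 1) + w₂ * ascFac α n * β ^ (α - 1))
            / (w₁ * ((n - 1)! : ℝ) * (β + 1) ^ (α - 1)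
                + w₂ * ascFac α (n - 1) * β ^ (α - 1)))
          * p (n - 1) := by
  have hβ1 : 0 < β + 1 := by linarith
  have hu_mixture : ∀ θ ∈ Ioi (0 : ℝ),
      u θ = w₁ * gammaPDFReal 1 β θ + w₂ * gammaPDFReal α β θ := by
    intro θ (hθ : 0 < θ)
    simp only [hu θ hθ, gammaPDFReal, if_pos hθ.le, rpow_one, Gamma_one, sub_self, rpow_zero,
      neg_mul]
    ring
  have hp_negBinomial : ∀ n, p n = w₁ * (β / (β + 1)) / (β + 1) ^ n
      + w₂ * (ascFac α n / n ! * (β / (β + 1)) ^ α / (β + 1) ^ n) := fun n ↦ by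
    have : (n ! : ℝ) ≠ 0 := by positivity
    rw [hp, setIntegral_congr_fun measurableSet_Ioi fun θ hθ ↦ by rw [hu_mixture θ hθ],
      integral_poisson_mul_gammaPDFReal_mixture one_pos hα hβ, ascFac_one, rpow_one]
    field_simp
  have hp_factorized : ∀ n, p n = β / (β + 1) ^ α / ((β + 1) ^ n * n !)
      * (w₁ * n ! * (β + 1) ^ (α - 1) + w₂ * ascFac α n * β ^ (α - 1)) := fun n ↦ by
    have : (n ! : ℝ) ≠ 0 := by positivity
    rw [hp_negBinomial, rpow_sub_one hβ1.ne', rpow_sub_one hβ.ne', div_rpow hβ.le hβ1.le]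
    field_simp
  have hN_pos : ∀ n : ℕ, 0 < w₁ * n ! * (β + 1) ^ (α - 1) + w₂ * ascFac α n * β ^ (α - 1) :=
    fun n ↦ by
      simpa only [mul_assoc] using mul_add_mul_pos_of_add_eq_one hw₁ hw₂ hw
        (by positivity : 0 < (n ! : ℝ) * (β + 1) ^ (α - 1))
        (mul_pos (ascFac_pos hα n) (by positivity))
  refine ⟨by simpa [ascFac] using hp_negBinomial 0, fun n hn ↦ ?_⟩
  obtain ⟨m, rfl⟩ := Nat.exists_eq_add_of_le' hn
  simpa using apply_succ_eq_of_eq_div_pow_mul_factorial hβ1.ne' hp_factorized (hN_pos m).ne'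
end
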